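/- arXiv:1607.00394 — 8 statements merged into one kernel-verified Lean document; each statement's English description precedes it below -/
import Mathlib

section
/- Let g be a probability vector on Fin n with strictly positive entries and let p, q be probability vectors on Fin n. Then there exists a column-stochastic matrix G with G g = g and G p = q if and only if p thermo-majorizes q relative to g. -/
open Matrix

/-- A column-stochastic matrix: nonnegative entries, each column sums to 1. -/
def ColStochastic {n : ℕ} (T : Matrix (Fin n) (Fin n) ℝ) : Prop :=
  (∀ i j, 0 ≤ T i j) ∧ ∀ j, ∑ i, T i j = 1

/-- A probability vector on `Fin n`. -/
def IsProbVec {n : ℕ} (p : Fin n → ℝ) : Prop :=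
  (∀ i, 0 ≤ p i) ∧ ∑ i, p i = 1

/-- `π` is a β-ordering permutation for `p` relative to `g`: the ratios
`p (π k) / g (π k)` are nonincreasing in `k`. -/
def BetaOrdered {n : ℕ} (g p : Fin n → ℝ) (π : Equiv.Perm (Fin n)) : Prop :=
  ∀ k l : Fin n, k ≤ l → p (π l) / g (π l) ≤ p (π k) / g (π k)

/-- The thermo-majorization (Lorenz) curve of `p` relative to `g`, computed with the
β-ordering permutation `π`: the piecewise-linear interpolation of the points
`(∑_{i ≤ k} g (π i), ∑_{i ≤ k} p (π i))`, starting at `(0, 0)`. -/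
noncomputable def lorenz {n : ℕ} (g p : Fin n → ℝ) (π : Equiv.Perm (Fin n)) (t : ℝ) : ℝ :=
  ∑ k : Fin n, (p (π k) / g (π k)) *
    min (max (t - ∑ j ∈ Finset.univ.filter (fun j => j < k), g (π j)) 0) (g (π k))

/-- `p` thermo-majorizes `q` relative to `g`: the Lorenz curve of `p` lies everywhere
above that of `q` on `[0, 1]` (the curves being computed from β-ordering permutations,
on which they do not depend). -/
def ThermoMaj {n : ℕ} (g p q : Fin n → ℝ) : Prop :=
  ∃ π π' : Equiv.Perm (Fin n), BetaOrdered g p π ∧ BetaOrdered g q π' ∧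
    ∀ t ∈ Set.Icc (0 : ℝ) 1, lorenz g q π' t ≤ lorenz g p π t

def TMex {n : ℕ} (f : Fin n → ℝ) : ℕ → ℝ := fun k => if h : k < n then f ⟨k, h⟩ else 0

def TMcs (f : ℕ → ℝ) (k : ℕ) : ℝ := ∑ j ∈ Finset.range k, f j

lemma TMex_lt {n : ℕ} (f : Fin n → ℝ) {k : ℕ} (h : k < n) : TMex f k = f ⟨k, h⟩ := dif_pos h

lemma TMex_apply {n : ℕ} (f : Fin n → ℝ) (k : Fin n) : TMex f k.1 = f k := by
  rw [TMex_lt f k.2]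

lemma TMsum_univ {n : ℕ} (f : Fin n → ℝ) : ∑ i, f i = ∑ k ∈ Finset.range n, TMex f k := by
  rw [← Fin.sum_univ_eq_sum_range]
  exact Finset.sum_congr rfl fun k _ => (TMex_apply f k).symm

lemma TMsum_filter_lt {n : ℕ} (f : Fin n → ℝ) (k : Fin n) :
    ∑ j ∈ Finset.univ.filter (fun j => j < k), f j = ∑ m ∈ Finset.range k.1, TMex f m := by
  rw [Finset.sum_filter]
  have h1 : ∑ j : Fin n, (if j < k then f j else 0)
      = ∑ m ∈ Finset.range n, (if m < k.1 then TMex f m else 0) := by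
    rw [← Fin.sum_univ_eq_sum_range]
    refine Finset.sum_congr rfl fun j _ => ?_
    by_cases h : (j : ℕ) < (k : ℕ)
    · rw [if_pos h, if_pos (Fin.lt_def.mpr h), TMex_apply]
    · rw [if_neg h, if_neg (fun hc => h (Fin.lt_def.mp hc))]
  rw [h1]
  rw [← Finset.sum_subset (Finset.range_subset_range.mpr k.2.le)
    (fun x _ hx => if_neg (by simpa using hx))]
  exact Finset.sum_congr rfl fun m hm => if_pos (Finset.mem_range.mp hm)

lemma TMstep (t c a : ℝ) (ha : 0 ≤ a) :
    min (max (t - c) 0) a = min t (c + a) - min t c := by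
  simp only [min_def, max_def]
  split_ifs <;> linarith

lemma TMclamp (x y s s' : ℝ) (hxy : x ≤ y) (hss : s ≤ s') :
    max 0 (min y s' - max x s) = min (max y s) s' - min (max x s) s' := by
  simp only [min_def, max_def]
  split_ifs <;> linarith

lemma TMex_nonneg {n : ℕ} {f : Fin n → ℝ} (hf : ∀ i, 0 ≤ f i) (k : ℕ) : 0 ≤ TMex f k := by
  unfold TMex; split <;> simp [hf]

/-- Rewriting `lorenz` as a `range` sum of telescoping min-terms. -/
lemma TMlorenz_eq {n : ℕ} (g p : Fin n → ℝ) (hg : ∀ i, 0 ≤ g i) (π : Equiv.Perm (Fin n)) (t : ℝ) :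
    lorenz g p π t = ∑ k ∈ Finset.range n, TMex (fun i => p (π i) / g (π i)) k *
      (min t (TMcs (TMex (fun i => g (π i))) (k + 1)) - min t (TMcs (TMex (fun i => g (π i))) k)) := by
  unfold lorenz
  rw [← Fin.sum_univ_eq_sum_range]
  refine Finset.sum_congr rfl fun k _ => ?_
  rw [TMex_apply, TMsum_filter_lt (fun j => g (π j)) k]
  have hcs : TMcs (TMex (fun i => g (π i))) (k.1 + 1)
      = TMcs (TMex (fun i => g (π i))) k.1 + TMex (fun i => g (π i)) k.1 := by
    unfold TMcs; rw [Finset.sum_range_succ]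
  rw [hcs, ← TMstep t _ _ (TMex_nonneg (fun i => hg (π i)) k.1), TMex_apply]
  rfl

/-- Abel summation: nonneg combination. -/
lemma TMabel (r d : ℕ → ℝ) (n : ℕ)
    (hr : ∀ k, k + 1 < n → r (k + 1) ≤ r k)
    (hD : ∀ m, m ≤ n → 0 ≤ ∑ k ∈ Finset.range m, d k)
    (hDn : ∑ k ∈ Finset.range n, d k = 0) :
    0 ≤ ∑ k ∈ Finset.range n, r k * d k := by
  have h := Finset.sum_range_by_parts r d n
  simp only [smul_eq_mul] at h
  rw [h, hDn, mul_zero, zero_sub, neg_nonneg]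
  apply Finset.sum_nonpos
  intro i hi
  rw [Finset.mem_range] at hi
  have h1 : i + 1 < n := by omega
  have h2 : 0 ≤ ∑ k ∈ Finset.range (i + 1), d k := hD _ (by omega)
  nlinarith [hr i h1]

/-- Greedy optimality: the Lorenz curve dominates any feasible value. -/
lemma TMgreedy (r a x : ℕ → ℝ) (n : ℕ)
    (ha : ∀ k, k < n → 0 ≤ a k) (hr : ∀ k, k + 1 < n → r (k + 1) ≤ r k)
    (hx0 : ∀ k, k < n → 0 ≤ x k) (hx1 : ∀ k, k < n → x k ≤ 1) :
    ∑ k ∈ Finset.range n, r k * (x k * a k)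
      ≤ ∑ k ∈ Finset.range n, r k *
        (min (∑ k ∈ Finset.range n, x k * a k) (TMcs a (k + 1))
          - min (∑ k ∈ Finset.range n, x k * a k) (TMcs a k)) := by
  set T := ∑ k ∈ Finset.range n, x k * a k with hT
  set d : ℕ → ℝ := fun k => (min T (TMcs a (k + 1)) - min T (TMcs a k)) - x k * a k with hd
  have hxa : ∀ k, k < n → 0 ≤ x k * a k := fun k hk => mul_nonneg (hx0 k hk) (ha k hk)
  have hTnn : 0 ≤ T := Finset.sum_nonneg fun k hk => hxa k (Finset.mem_range.mp hk)
  have hpart : ∀ m, ∑ k ∈ Finset.range m, d k = min T (TMcs a m) - ∑ k ∈ Finset.range m, x k * a k := by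
    intro m
    rw [hd, Finset.sum_sub_distrib, Finset.sum_range_sub (fun m => min T (TMcs a m))]
    simp [TMcs, min_eq_right hTnn]
  have hD : ∀ m, m ≤ n → 0 ≤ ∑ k ∈ Finset.range m, d k := by
    intro m hm
    rw [hpart]
    have h1 : ∑ k ∈ Finset.range m, x k * a k ≤ TMcs a m := by
      apply Finset.sum_le_sum
      intro k hk
      have hk' : k < n := lt_of_lt_of_le (Finset.mem_range.mp hk) hm
      nlinarith [hx1 k hk', ha k hk', hx0 k hk']
    have h2 : ∑ k ∈ Finset.range m, x k * a k ≤ T := by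
      apply Finset.sum_le_sum_of_subset_of_nonneg (Finset.range_subset_range.mpr hm)
      intro k hk _
      exact hxa k (Finset.mem_range.mp hk)
    exact le_sub_iff_add_le.mpr (by rw [zero_add]; exact le_min h2 h1)
  have hDn : ∑ k ∈ Finset.range n, d k = 0 := by
    rw [hpart]
    have : T ≤ TMcs a n := Finset.sum_le_sum fun k hk => by
      nlinarith [hx1 k (Finset.mem_range.mp hk), ha k (Finset.mem_range.mp hk), hx0 k (Finset.mem_range.mp hk)]
    rw [min_eq_left this]; ring
  have := TMabel r d n hr hD hDn
  have heq : ∑ k ∈ Finset.range n, r k * d k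
      = ∑ k ∈ Finset.range n, r k * (min T (TMcs a (k + 1)) - min T (TMcs a k))
        - ∑ k ∈ Finset.range n, r k * (x k * a k) := by
    rw [← Finset.sum_sub_distrib]
    exact Finset.sum_congr rfl fun k _ => by rw [hd]; ring
  linarith [heq ▸ this]

lemma TMexists_betaOrdered {n : ℕ} (g p : Fin n → ℝ) : ∃ π, BetaOrdered g p π := by
  refine ⟨Tuple.sort (fun i => -(p i / g i)), fun k l hkl => ?_⟩
  have := Tuple.monotone_sort (fun i => -(p i / g i)) hkl
  simpa using this

lemma TMforward {n : ℕ} (g p q : Fin n → ℝ) (hg : IsProbVec g) (hgpos : ∀ i, 0 < g i)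
    (G : Matrix (Fin n) (Fin n) ℝ) (hGcs : ColStochastic G) (hGg : G *ᵥ g = g) (hGp : G *ᵥ p = q)
    (π π' : Equiv.Perm (Fin n)) (hπ : BetaOrdered g p π)
    (t : ℝ) (ht0 : 0 ≤ t) (ht1 : t ≤ 1) : lorenz g q π' t ≤ lorenz g p π t := by
  set b : Fin n → ℝ := fun k => g (π' k) with hb
  set m' : Fin n → ℝ := fun k =>
    min (max (t - ∑ j ∈ Finset.univ.filter (fun j => j < k), b j) 0) (b k) with hm'
  set y : Fin n → ℝ := fun i => m' (π'.symm i) / g i with hy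
  have hgne : ∀ i, g i ≠ 0 := fun i => (hgpos i).ne'
  have hm'0 : ∀ k, 0 ≤ m' k := fun k => le_min (le_max_right _ _) (hgpos (π' k)).le
  have hm'b : ∀ k, m' k ≤ b k := fun k => min_le_right _ _
  have hyπ : ∀ k, y (π' k) = m' k / b k := by
    intro k; rw [hy]; simp [Equiv.symm_apply_apply]; rfl
  have hy0 : ∀ i, 0 ≤ y i := fun i => div_nonneg (hm'0 _) (hgpos i).le
  have hy1 : ∀ i, y i ≤ 1 := by
    intro i
    rw [hy, div_le_one (hgpos i)]
    have := hm'b (π'.symm i)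
    simpa [hb, Equiv.apply_symm_apply] using this
  -- lorenz of q equals ∑ y i * q i
  have h1 : lorenz g q π' t = ∑ i, y i * q i := by
    rw [← Equiv.sum_comp π' (fun i => y i * q i)]
    unfold lorenz
    refine Finset.sum_congr rfl fun k _ => ?_
    rw [hyπ k]
    have : (fun j => j < k) = (fun j => j < k) := rfl
    field_simp
    ring
  -- ∑ m' = t
  have hsum_m : ∑ k, m' k = t := by
    rw [TMsum_univ]
    have hcong : ∀ k ∈ Finset.range n, TMex m' k
        = min t (TMcs (TMex b) (k + 1)) - min t (TMcs (TMex b) k) := by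
      intro k hk
      have hkn := Finset.mem_range.mp hk
      rw [TMex_lt m' hkn, hm']
      simp only
      rw [TMsum_filter_lt b ⟨k, hkn⟩]
      have hcs : TMcs (TMex b) (k + 1) = TMcs (TMex b) k + TMex b k := by
        unfold TMcs; rw [Finset.sum_range_succ]
      rw [hcs, ← TMstep t _ _ (TMex_nonneg (fun i => (hgpos (π' i)).le) k), TMex_lt b hkn]
      rfl
    rw [Finset.sum_congr rfl hcong, Finset.sum_range_sub (fun m => min t (TMcs (TMex b) m))]
    have hC0 : TMcs (TMex b) 0 = 0 := by simp [TMcs]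
    have hCn : TMcs (TMex b) n = 1 := by
      rw [TMcs, ← TMsum_univ, hb, Equiv.sum_comp π' g, hg.2]
    rw [hC0, hCn, min_eq_left ht1, min_eq_right ht0, sub_zero]
  set x : Fin n → ℝ := fun j => ∑ i, y i * G i j with hx
  have hx0 : ∀ j, 0 ≤ x j := fun j =>
    Finset.sum_nonneg fun i _ => mul_nonneg (hy0 i) (hGcs.1 i j)
  have hx1 : ∀ j, x j ≤ 1 := by
    intro j
    calc x j ≤ ∑ i, G i j := Finset.sum_le_sum fun i _ =>
          mul_le_of_le_one_left (hGcs.1 i j) (hy1 i)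
    _ = 1 := hGcs.2 j
  have hswap : ∀ v : Fin n → ℝ, ∑ j, x j * v j = ∑ i, y i * (G *ᵥ v) i := by
    intro v
    calc ∑ j, x j * v j = ∑ j, ∑ i, (y i * G i j) * v j := by
          simp only [hx, Finset.sum_mul]
      _ = ∑ i, ∑ j, (y i * G i j) * v j := Finset.sum_comm
      _ = ∑ i, y i * (G *ᵥ v) i := by
          simp only [Matrix.mulVec, dotProduct, Finset.mul_sum]
          exact Finset.sum_congr rfl fun i _ => Finset.sum_congr rfl fun j _ => by ring
  have hxp : ∑ j, x j * p j = ∑ i, y i * q i := by rw [hswap p, hGp]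
  have hxg : ∑ j, x j * g j = t := by
    rw [hswap g, hGg, ← hsum_m, ← Equiv.sum_comp π' (fun i => y i * g i)]
    refine Finset.sum_congr rfl fun k _ => ?_
    rw [hyπ k]
    exact div_mul_cancel₀ (m' k) (hgne (π' k))
  -- greedy bound
  have hkey := TMgreedy (TMex (fun i => p (π i) / g (π i))) (TMex (fun i => g (π i)))
    (TMex (fun i => x (π i))) n
    (fun k hk => TMex_nonneg (fun i => (hgpos (π i)).le) k)
    (fun k hk => by
      rw [TMex_lt _ hk, TMex_lt _ (Nat.lt_of_succ_lt hk)]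
      exact hπ ⟨k, Nat.lt_of_succ_lt hk⟩ ⟨k + 1, hk⟩ (by simp [Fin.le_def]))
    (fun k hk => by rw [TMex_lt _ hk]; exact hx0 _)
    (fun k hk => by rw [TMex_lt _ hk]; exact hx1 _)
  have hT : ∑ k ∈ Finset.range n, TMex (fun i => x (π i)) k * TMex (fun i => g (π i)) k = t := by
    have : ∀ k ∈ Finset.range n, TMex (fun i => x (π i)) k * TMex (fun i => g (π i)) k
        = TMex (fun i => x (π i) * g (π i)) k := by
      intro k hk
      have hkn := Finset.mem_range.mp hk
      rw [TMex_lt _ hkn, TMex_lt _ hkn, TMex_lt _ hkn]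
    rw [Finset.sum_congr rfl this, ← TMsum_univ, Equiv.sum_comp π (fun j => x j * g j), hxg]
  rw [hT] at hkey
  have hLHS : ∑ k ∈ Finset.range n, TMex (fun i => p (π i) / g (π i)) k *
      (TMex (fun i => x (π i)) k * TMex (fun i => g (π i)) k) = ∑ j, x j * p j := by
    have : ∀ k ∈ Finset.range n, TMex (fun i => p (π i) / g (π i)) k *
        (TMex (fun i => x (π i)) k * TMex (fun i => g (π i)) k)
        = TMex (fun i => x (π i) * p (π i)) k := by
      intro k hk
      have hkn := Finset.mem_range.mp hk
      rw [TMex_lt _ hkn, TMex_lt _ hkn, TMex_lt _ hkn, TMex_lt _ hkn]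
      field_simp [hgne (π ⟨k, hkn⟩)]
    rw [Finset.sum_congr rfl this, ← TMsum_univ, Equiv.sum_comp π (fun j => x j * p j)]
  rw [hLHS] at hkey
  rw [h1, ← hxp, TMlorenz_eq g p hg.1 π t]
  exact hkey

lemma TMpair {n : ℕ} {i j : Fin n} (hij : i ≠ j) (x y : ℝ) :
    ∑ k, (if k = i then x else if k = j then y else 0) = x + y := by
  have h : ∀ k : Fin n, (if k = i then x else if k = j then y else 0)
      = (if k = i then x else 0) + (if k = j then y else 0) := by
    intro k
    split_ifs <;> simp_all
  rw [Finset.sum_congr rfl fun k _ => h k, Finset.sum_add_distrib,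
    Finset.sum_ite_eq' Finset.univ i (fun _ => x), Finset.sum_ite_eq' Finset.univ j (fun _ => y)]
  simp

lemma TMpairc {n : ℕ} {i j : Fin n} (hij : i ≠ j) (x y : ℝ) (c : Fin n → ℝ) :
    ∑ k, (if k = i then x else if k = j then y else 0) * c k = x * c i + y * c j := by
  have h : ∀ k : Fin n, (if k = i then x else if k = j then y else 0) * c k
      = (if k = i then x * c i else if k = j then y * c j else 0) := by
    intro k
    split_ifs <;> simp_all
  rw [Finset.sum_congr rfl fun k _ => h k, TMpair hij]

lemma TMsinglec {n : ℕ} (k : Fin n) (c : Fin n → ℝ) :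
    ∑ l, (if l = k then (1:ℝ) else 0) * c l = c k := by
  have h : ∀ l : Fin n, (if l = k then (1:ℝ) else 0) * c l = (if l = k then c l else 0) := by
    intro l; split_ifs <;> simp
  rw [Finset.sum_congr rfl fun l _ => h l, Finset.sum_ite_eq' Finset.univ k c]
  simp

lemma TMid_colStoch {n : ℕ} : ColStochastic (1 : Matrix (Fin n) (Fin n) ℝ) := by
  constructor
  · intro i j
    rw [Matrix.one_apply]
    split <;> norm_num
  · intro j
    simp [Matrix.one_apply]

lemma TMmul_colStoch {n : ℕ} {M A : Matrix (Fin n) (Fin n) ℝ}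
    (hM : ColStochastic M) (hA : ColStochastic A) : ColStochastic (M * A) := by
  constructor
  · intro i j
    rw [Matrix.mul_apply]
    exact Finset.sum_nonneg fun k _ => mul_nonneg (hM.1 i k) (hA.1 k j)
  · intro j
    simp only [Matrix.mul_apply]
    rw [Finset.sum_comm]
    calc ∑ k, ∑ i, M i k * A k j = ∑ k, (∑ i, M i k) * A k j := by
          simp [Finset.sum_mul]
      _ = ∑ k, A k j := by
          refine Finset.sum_congr rfl fun k _ => by rw [hM.2 k, one_mul]
      _ = 1 := hA.2 j

/-- Core Hardy–Littlewood–Pólya style induction: same Gibbs vector `b`, both `u` and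
`v` sorted by ratios, partial sums dominate. -/
lemma TMcore {n : ℕ} (b : Fin n → ℝ) (hb : ∀ i, 0 < b i) (v : Fin n → ℝ)
    (hv : ∀ k l : Fin n, k ≤ l → v l / b l ≤ v k / b k) :
    ∀ N : ℕ, ∀ u : Fin n → ℝ,
      (Finset.univ.filter (fun m => u m ≠ v m)).card ≤ N →
      (∀ k l : Fin n, k ≤ l → u l / b l ≤ u k / b k) →
      (∀ k : ℕ, k ≤ n → ∑ m ∈ Finset.range k, TMex v m ≤ ∑ m ∈ Finset.range k, TMex u m) →
      (∑ m, u m = ∑ m, v m) →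
      ∃ M : Matrix (Fin n) (Fin n) ℝ, ColStochastic M ∧ M *ᵥ b = b ∧ M *ᵥ u = v := by
  intro N
  induction N with
  | zero =>
    intro u hcard _ _ _
    have hfe : Finset.univ.filter (fun m => u m ≠ v m) = ∅ :=
      Finset.card_eq_zero.mp (Nat.le_zero.mp hcard)
    have huv : u = v := by
      funext m
      by_contra hm
      have : m ∈ Finset.univ.filter (fun m => u m ≠ v m) := by
        simp [hm]
      rw [hfe] at this
      exact absurd this (Finset.notMem_empty m)
    exact ⟨1, TMid_colStoch, Matrix.one_mulVec b, by rw [Matrix.one_mulVec, huv]⟩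
  | succ N ih =>
    intro u hcard hu hps htot
    by_cases huv : u = v
    · exact ⟨1, TMid_colStoch, Matrix.one_mulVec b, by rw [Matrix.one_mulVec, huv]⟩
    -- existence of i
    have hDne : (Finset.univ.filter (fun m => v m < u m)).Nonempty := by
      rw [Finset.filter_nonempty_iff]
      by_contra h
      push_neg at h
      have hle : ∀ m, u m ≤ v m := fun m => h m (Finset.mem_univ m)
      obtain ⟨m0, hm0⟩ : ∃ m, u m ≠ v m := Function.ne_iff.mp huv
      have : ∑ m, u m < ∑ m, v m :=
        Finset.sum_lt_sum (fun m _ => hle m) ⟨m0, Finset.mem_univ m0, lt_of_le_of_ne (hle m0) hm0⟩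
      linarith [htot]
    set i := (Finset.univ.filter (fun m => v m < u m)).max' hDne with hidef
    have hi : v i < u i := by
      have := (Finset.univ.filter (fun m => v m < u m)).max'_mem hDne
      rw [← hidef] at this
      exact (Finset.mem_filter.mp this).2
    have himax : ∀ m, i < m → u m ≤ v m := by
      intro m him
      by_contra h
      have hm : m ∈ Finset.univ.filter (fun m => v m < u m) := by
        simp [not_le.mp h]
      exact absurd (Finset.le_max' _ m hm) (not_le.mpr him)
    -- existence of j
    have hEne : (Finset.univ.filter (fun m => i < m ∧ u m < v m)).Nonempty := by
      rw [Finset.filter_nonempty_iff]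
      by_contra h
      push_neg at h
      have heq : ∀ m, i < m → u m = v m := by
        intro m him
        exact le_antisymm (himax m him) (h m (Finset.mem_univ m) him)
      -- contradiction with sums
      have h0 : ∑ m ∈ Finset.range n, (TMex u m - TMex v m) = 0 := by
        rw [Finset.sum_sub_distrib, ← TMsum_univ, ← TMsum_univ, htot, sub_self]
      have h1 : ∑ m ∈ Finset.range n, (TMex u m - TMex v m)
          = ∑ m ∈ Finset.range (i.1 + 1), (TMex u m - TMex v m)
            + ∑ m ∈ Finset.Ico (i.1 + 1) n, (TMex u m - TMex v m) := by
        simp only [Finset.range_eq_Ico]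
        exact (Finset.sum_Ico_consecutive _ (Nat.zero_le _) (Nat.succ_le_of_lt i.2)).symm
      have h2 : ∑ m ∈ Finset.Ico (i.1 + 1) n, (TMex u m - TMex v m) = 0 := by
        apply Finset.sum_eq_zero
        intro m hm
        obtain ⟨hm1, hm2⟩ := Finset.mem_Ico.mp hm
        rw [TMex_lt u hm2, TMex_lt v hm2, heq ⟨m, hm2⟩ (by simp only [Fin.lt_def, Fin.val_mk]; omega), sub_self]
      have h3 : ∑ m ∈ Finset.range (i.1 + 1), (TMex u m - TMex v m)
          = ∑ m ∈ Finset.range i.1, (TMex u m - TMex v m) + (u i - v i) := by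
        rw [Finset.sum_range_succ, TMex_lt u i.2, TMex_lt v i.2]
      have h4 : 0 ≤ ∑ m ∈ Finset.range i.1, (TMex u m - TMex v m) := by
        rw [Finset.sum_sub_distrib, sub_nonneg]
        exact hps i.1 (le_of_lt i.2)
      rw [h1, h2, h3] at h0
      linarith
    set j := (Finset.univ.filter (fun m => i < m ∧ u m < v m)).min' hEne with hjdef
    have hj : i < j ∧ u j < v j := by
      have := (Finset.univ.filter (fun m => i < m ∧ u m < v m)).min'_mem hEne
      rw [← hjdef] at this
      exact (Finset.mem_filter.mp this).2
    have hjmin : ∀ m, i < m → u m < v m → j ≤ m := by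
      intro m h1 h2
      apply Finset.min'_le
      simp [h1, h2]
    have hbetween : ∀ m, i < m → m < j → u m = v m := by
      intro m h1 h2
      refine le_antisymm (himax m h1) ?_
      by_contra h
      exact absurd (hjmin m h1 (not_le.mp h)) (not_le.mpr h2)
    have hij : i ≠ j := ne_of_lt hj.1
    -- delta and the step matrix
    set δ := min (u i - v i) (v j - u j) with hδdef
    have hδpos : 0 < δ := lt_min (by linarith [hi]) (by linarith [hj.2])
    have hδi : δ ≤ u i - v i := min_le_left _ _
    have hδj : δ ≤ v j - u j := min_le_right _ _
    have hvij : v j * b i ≤ v i * b j := (div_le_div_iff₀ (hb j) (hb i)).mp (hv i j (le_of_lt hj.1))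
    set Dm := b j * u i - b i * u j with hDmdef
    have hDm : 0 < Dm := by nlinarith [hb i, hb j]
    have hDj : δ * b j ≤ Dm := by nlinarith [hb i, hb j]
    have hDi : δ * b i ≤ Dm := by nlinarith [hb i, hb j]
    set w := δ / Dm with hwdef
    have hw0 : 0 ≤ w := le_of_lt (div_pos hδpos hDm)
    have hwbj : w * b j ≤ 1 := by
      rw [hwdef, div_mul_eq_mul_div, div_le_one hDm]; exact hDj
    have hwbi : w * b i ≤ 1 := by
      rw [hwdef, div_mul_eq_mul_div, div_le_one hDm]; exact hDi
    have hwDm : w * Dm = δ := div_mul_cancel₀ δ (ne_of_gt hDm)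
    set A : Matrix (Fin n) (Fin n) ℝ := fun k l =>
      if l = i then (if k = i then 1 - w * b j else if k = j then w * b j else 0)
      else if l = j then (if k = i then w * b i else if k = j then 1 - w * b i else 0)
      else (if k = l then 1 else 0) with hAdef
    have hrowi : ∀ l, A i l = if l = i then 1 - w * b j else if l = j then w * b i else 0 := by
      intro l
      rw [hAdef]
      by_cases h1 : l = i
      · simp [h1]
      · by_cases h2 : l = j
        · simp [h1, h2, hij]
        · simp [h1, h2, Ne.symm h1]
    have hrowj : ∀ l, A j l = if l = i then w * b j else if l = j then 1 - w * b i else 0 := by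
      intro l
      rw [hAdef]
      by_cases h1 : l = i
      · simp [h1, Ne.symm hij]
      · by_cases h2 : l = j
        · simp [h1, h2, Ne.symm hij]
        · simp [h1, h2, Ne.symm h2]
    have hrowo : ∀ k, k ≠ i → k ≠ j → ∀ l, A k l = if l = k then 1 else 0 := by
      intro k hki hkj l
      rw [hAdef]
      by_cases h1 : l = i
      · simp [h1, hki, hkj, Ne.symm hki]
      · by_cases h2 : l = j
        · simp [h1, h2, hki, hkj, Ne.symm hkj]
        · simp only [h1, h2, if_false]
          by_cases h3 : k = l
          · rw [if_pos h3, if_pos h3.symm]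
          · rw [if_neg h3, if_neg (fun h => h3 h.symm)]
    have hAcs : ColStochastic A := by
      constructor
      · intro k l
        simp only [hAdef]
        split_ifs <;>
          linarith [hwbi, hwbj, mul_nonneg hw0 (le_of_lt (hb i)), mul_nonneg hw0 (le_of_lt (hb j))]
      · intro l
        simp only [hAdef]
        by_cases h1 : l = i
        · subst h1
          simp only [eq_self_iff_true, if_true]
          rw [TMpair hij]; ring
        · by_cases h2 : l = j
          · subst h2
            simp only [if_neg h1, eq_self_iff_true, if_true]
            rw [TMpair hij]; ring
          · simp only [if_neg h1, if_neg h2]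
            rw [Finset.sum_ite_eq' Finset.univ l (fun _ => (1:ℝ))]
            simp
    have hAb : A *ᵥ b = b := by
      funext k
      show ∑ l, A k l * b l = b k
      by_cases h1 : k = i
      · subst h1
        rw [Finset.sum_congr rfl fun l _ => by rw [hrowi l], TMpairc hij]
        ring
      · by_cases h2 : k = j
        · subst h2
          rw [Finset.sum_congr rfl fun l _ => by rw [hrowj l], TMpairc hij]
          ring
        · rw [Finset.sum_congr rfl fun l _ => by rw [hrowo k h1 h2 l], TMsinglec]
    set u' : Fin n → ℝ := fun m => if m = i then u i - δ else if m = j then u j + δ else u m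
      with hu'def
    have hAu : A *ᵥ u = u' := by
      funext k
      show ∑ l, A k l * u l = u' k
      by_cases h1 : k = i
      · subst h1
        rw [Finset.sum_congr rfl fun l _ => by rw [hrowi l], TMpairc hij, hu'def]
        simp only [eq_self_iff_true, if_true]
        have : (1 - w * b j) * u i + w * b i * u j = u i - w * Dm := by
          rw [hDmdef]; ring
        rw [this, hwDm]
      · by_cases h2 : k = j
        · subst h2
          rw [Finset.sum_congr rfl fun l _ => by rw [hrowj l], TMpairc hij, hu'def]
          simp only [if_neg (Ne.symm hij), eq_self_iff_true, if_true]
          have : w * b j * u i + (1 - w * b i) * u j = u j + w * Dm := by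
            rw [hDmdef]; ring
          rw [this, hwDm]
        · rw [Finset.sum_congr rfl fun l _ => by rw [hrowo k h1 h2 l], TMsinglec, hu'def]
          simp [h1, h2]
    -- ratio facts
    have hvii : v i / b i < u i / b i := (div_lt_div_iff_of_pos_right (hb i)).mpr hi
    have hujvj : u j / b j < v j / b j := (div_lt_div_iff_of_pos_right (hb j)).mpr hj.2
    have hvji : v j / b j ≤ v i / b i := hv i j hj.1.le
    have hri1 : v i / b i ≤ (u i - δ) / b i := (div_le_div_iff_of_pos_right (hb i)).mpr (by linarith)
    have hri2 : (u i - δ) / b i ≤ u i / b i := (div_le_div_iff_of_pos_right (hb i)).mpr (by linarith)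
    have hrj1 : u j / b j ≤ (u j + δ) / b j := (div_le_div_iff_of_pos_right (hb j)).mpr (by linarith)
    have hrj2 : (u j + δ) / b j ≤ v j / b j := (div_le_div_iff_of_pos_right (hb j)).mpr (by linarith)
    have hval : ∀ m, m ≠ i → m ≠ j → u' m = u m := by
      intro m h1 h2; simp only [hu'def]; rw [if_neg h1, if_neg h2]
    have hvi' : u' i = u i - δ := by simp [hu'def]
    have hvj' : u' j = u j + δ := by simp [hu'def, Ne.symm hij]
    have hu'sorted : ∀ k l : Fin n, k ≤ l → u' l / b l ≤ u' k / b k := by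
      intro k l hkl
      by_cases hk1 : k = i
      · subst hk1
        rw [hvi']
        by_cases hl1 : l = i
        · rw [hl1, hvi']
        · by_cases hl2 : l = j
          · rw [hl2, hvj']
            exact le_trans hrj2 (le_trans hvji hri1)
          · have hil : i < l := lt_of_le_of_ne hkl (Ne.symm hl1)
            rw [hval l hl1 hl2]
            rcases lt_or_ge l j with h | h
            · rw [hbetween l hil h]
              exact le_trans (hv i l hil.le) hri1
            · have hjl : j ≤ l := h
              calc u l / b l ≤ u j / b j := hu j l hjl
                _ ≤ v j / b j := hujvj.le
                _ ≤ v i / b i := hvji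
                _ ≤ (u i - δ) / b i := hri1
      · by_cases hk2 : k = j
        · subst hk2
          rw [hvj']
          by_cases hl1 : l = j
          · rw [hl1, hvj']
          · have hjl : j < l := lt_of_le_of_ne hkl (Ne.symm hl1)
            have hl0 : l ≠ i := by
              intro h
              rw [h] at hjl
              exact absurd hj.1 (not_lt.mpr hjl.le)
            rw [hval l hl0 hl1]
            exact le_trans (hu j l hkl) hrj1
        · rw [hval k hk1 hk2]
          by_cases hl1 : l = i
          · subst hl1
            rw [hvi']
            exact le_trans hri2 (hu k i hkl)
          · by_cases hl2 : l = j
            · subst hl2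
              rw [hvj']
              rcases lt_or_ge k i with h | h
              · calc (u j + δ) / b j ≤ v j / b j := hrj2
                  _ ≤ v i / b i := hvji
                  _ ≤ u i / b i := hvii.le
                  _ ≤ u k / b k := hu k i h.le
              · have hik : i < k := lt_of_le_of_ne h (Ne.symm hk1)
                have hkj : k < j := lt_of_le_of_ne hkl hk2
                rw [hbetween k hik hkj]
                exact le_trans hrj2 (hv k j hkl)
            · rw [hval l hl1 hl2]
              exact hu k l hkl
    -- partial sums for u'
    have hex' : ∀ m : ℕ, TMex u' m
        = TMex u m + (if m = i.1 then -δ else 0) + (if m = j.1 then δ else 0) := by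
      intro m
      by_cases hm : m < n
      · rw [TMex_lt _ hm, TMex_lt _ hm]
        by_cases h1 : (⟨m, hm⟩ : Fin n) = i
        · rw [if_pos (congrArg Fin.val h1), if_neg (fun h : m = j.1 => hij (h1.symm.trans (Fin.ext h)))]
          have e1 : u' ⟨m, hm⟩ = u i - δ := by rw [h1, hvi']
          have e2 : u ⟨m, hm⟩ = u i := congrArg u h1
          rw [e1, e2]; ring
        · by_cases h2 : (⟨m, hm⟩ : Fin n) = j
          · rw [if_neg (fun h : m = i.1 => h1 (Fin.ext h)), if_pos (congrArg Fin.val h2)]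
            have e1 : u' ⟨m, hm⟩ = u j + δ := by rw [h2, hvj']
            have e2 : u ⟨m, hm⟩ = u j := congrArg u h2
            rw [e1, e2]; ring
          · rw [if_neg (fun h : m = i.1 => h1 (Fin.ext h)),
              if_neg (fun h : m = j.1 => h2 (Fin.ext h))]
            rw [hval ⟨m, hm⟩ h1 h2]
            ring
      · unfold TMex
        rw [dif_neg hm, dif_neg hm,
          if_neg (fun h : m = i.1 => hm (h ▸ i.2)), if_neg (fun h : m = j.1 => hm (h ▸ j.2))]
        ring
    have hps' : ∀ k : ℕ, k ≤ n →
        ∑ m ∈ Finset.range k, TMex v m ≤ ∑ m ∈ Finset.range k, TMex u' m := by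
      intro k hk
      have hsum : ∑ m ∈ Finset.range k, TMex u' m
          = ∑ m ∈ Finset.range k, TMex u m
            + (if i.1 < k then -δ else 0) + (if j.1 < k then δ else 0) := by
        rw [Finset.sum_congr rfl fun m _ => hex' m, Finset.sum_add_distrib,
          Finset.sum_add_distrib,
          Finset.sum_ite_eq' (Finset.range k) i.1 (fun _ => -δ),
          Finset.sum_ite_eq' (Finset.range k) j.1 (fun _ => δ)]
        simp [Finset.mem_range]
      rw [hsum]
      have hijv : i.1 < j.1 := hj.1
      rcases le_or_gt k i.1 with h1 | h1
      · rw [if_neg (not_lt.mpr h1), if_neg (not_lt.mpr (le_trans h1 hijv.le))]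
        have := hps k hk
        linarith
      · rcases le_or_gt k j.1 with h2 | h2
        · rw [if_pos h1, if_neg (not_lt.mpr h2)]
          have hsplit : ∑ m ∈ Finset.range k, (TMex u m - TMex v m)
              = ∑ m ∈ Finset.range (i.1 + 1), (TMex u m - TMex v m)
                + ∑ m ∈ Finset.Ico (i.1 + 1) k, (TMex u m - TMex v m) := by
            simp only [Finset.range_eq_Ico]
            exact (Finset.sum_Ico_consecutive _ (Nat.zero_le _) h1).symm
          have hz : ∑ m ∈ Finset.Ico (i.1 + 1) k, (TMex u m - TMex v m) = 0 := by
            apply Finset.sum_eq_zero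
            intro m hm
            obtain ⟨hm1, hm2⟩ := Finset.mem_Ico.mp hm
            have hmn : m < n := lt_of_lt_of_le hm2 hk
            rw [TMex_lt u hmn, TMex_lt v hmn,
              hbetween ⟨m, hmn⟩ (by simp only [Fin.lt_def, Fin.val_mk]; omega) (by simp only [Fin.lt_def, Fin.val_mk]; omega), sub_self]
          have h3 : ∑ m ∈ Finset.range (i.1 + 1), (TMex u m - TMex v m)
              = ∑ m ∈ Finset.range i.1, (TMex u m - TMex v m) + (u i - v i) := by
            rw [Finset.sum_range_succ, TMex_lt u i.2, TMex_lt v i.2]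
          have h4 : 0 ≤ ∑ m ∈ Finset.range i.1, (TMex u m - TMex v m) := by
            rw [Finset.sum_sub_distrib, sub_nonneg]
            exact hps i.1 (le_of_lt i.2)
          have h5 : ∑ m ∈ Finset.range k, (TMex u m - TMex v m)
              = ∑ m ∈ Finset.range k, TMex u m - ∑ m ∈ Finset.range k, TMex v m :=
            Finset.sum_sub_distrib _ _
          rw [hsplit, hz, h3] at h5
          linarith
        · rw [if_pos h1, if_pos h2]
          have := hps k hk
          linarith
    -- total sums
    have hpt : ∀ m : Fin n, u' m = u m + (if m = i then -δ else 0) + (if m = j then δ else 0) := by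
      intro m
      simp only [hu'def]
      by_cases h1 : m = i
      · subst h1; rw [if_pos rfl, if_pos rfl, if_neg hij]; ring
      · by_cases h2 : m = j
        · subst h2; rw [if_neg h1, if_pos rfl, if_neg h1, if_pos rfl]; ring
        · rw [if_neg h1, if_neg h2, if_neg h1, if_neg h2]; ring
    have htot' : ∑ m, u' m = ∑ m, v m := by
      rw [Finset.sum_congr rfl fun m _ => hpt m, Finset.sum_add_distrib, Finset.sum_add_distrib,
        Finset.sum_ite_eq' Finset.univ i (fun _ => -δ),
        Finset.sum_ite_eq' Finset.univ j (fun _ => δ)]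
      simp only [Finset.mem_univ, if_pos]
      linarith [htot]
    -- cardinality decreases
    have hsub : Finset.univ.filter (fun m => u' m ≠ v m)
        ⊆ Finset.univ.filter (fun m => u m ≠ v m) := by
      intro m hm
      rw [Finset.mem_filter] at hm ⊢
      refine ⟨Finset.mem_univ m, ?_⟩
      by_cases h1 : m = i
      · subst h1; exact ne_of_gt hi
      · by_cases h2 : m = j
        · subst h2; exact ne_of_lt hj.2
        · rw [← hval m h1 h2]; exact hm.2
    have hstrict : ∃ m ∈ Finset.univ.filter (fun m => u m ≠ v m),
        m ∉ Finset.univ.filter (fun m => u' m ≠ v m) := by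
      rcases le_total (u i - v i) (v j - u j) with h | h
      · refine ⟨i, by simp [ne_of_gt hi], ?_⟩
        have heq : u' i = v i := by
          rw [hvi', hδdef, min_eq_left h]; ring
        simp [heq]
      · refine ⟨j, by simp [ne_of_lt hj.2], ?_⟩
        have heq : u' j = v j := by
          rw [hvj', hδdef, min_eq_right h]; ring
        simp [heq]
    have hcard' : (Finset.univ.filter (fun m => u' m ≠ v m)).card ≤ N := by
      obtain ⟨m, hm1, hm2⟩ := hstrict
      have := Finset.card_lt_card ((Finset.ssubset_iff_of_subset hsub).mpr ⟨m, hm1, hm2⟩)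
      omega
    obtain ⟨M, hM, hMb, hMu⟩ := ih u' hcard' hu'sorted hps' htot'
    refine ⟨M * A, TMmul_colStoch hM hAcs, ?_, ?_⟩
    · rw [← Matrix.mulVec_mulVec, hAb, hMb]
    · rw [← Matrix.mulVec_mulVec, hAu, hMu]

lemma TMclamp2 (t c e : ℝ) (he : 0 ≤ e) :
    min (max t c) (c + e) - c = min (max (t - c) 0) e := by
  simp only [min_def, max_def]
  split_ifs <;> linarith

lemma TMsum_vlt {n : ℕ} (f : Fin n → ℝ) {k : ℕ} (hk : k ≤ n) :
    ∑ j : Fin n, (if (j : ℕ) < k then f j else 0) = ∑ m ∈ Finset.range k, TMex f m := by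
  have h1 : ∑ j : Fin n, (if (j : ℕ) < k then f j else 0)
      = ∑ m ∈ Finset.range n, (if m < k then TMex f m else 0) := by
    rw [← Fin.sum_univ_eq_sum_range]
    refine Finset.sum_congr rfl fun j _ => ?_
    by_cases h : (j : ℕ) < k
    · rw [if_pos h, if_pos h, TMex_apply]
    · rw [if_neg h, if_neg h]
  rw [h1, ← Finset.sum_subset (Finset.range_subset_range.mpr hk)
    (fun x _ hx => if_neg (by simpa using hx))]
  exact Finset.sum_congr rfl fun m hm => if_pos (Finset.mem_range.mp hm)

lemma TMcs_mono {n : ℕ} (f : Fin n → ℝ) (hf : ∀ i, 0 ≤ f i) :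
    Monotone (TMcs (TMex f)) := by
  intro m m' hm
  exact Finset.sum_le_sum_of_subset_of_nonneg (Finset.range_subset_range.mpr hm)
    (fun k _ _ => TMex_nonneg hf k)

lemma TMcs_nonneg {n : ℕ} (f : Fin n → ℝ) (hf : ∀ i, 0 ≤ f i) (m : ℕ) :
    0 ≤ TMcs (TMex f) m :=
  Finset.sum_nonneg fun k _ => TMex_nonneg hf k

/-- The backward direction: thermo-majorization implies the existence of a
Gibbs-preserving column-stochastic map. -/
lemma TMbackward {n : ℕ} (g p q : Fin n → ℝ)
    (hg : IsProbVec g) (hgpos : ∀ i, 0 < g i) (hp : IsProbVec p) (hq : IsProbVec q)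
    (π π' : Equiv.Perm (Fin n)) (hπ : BetaOrdered g p π) (hπ' : BetaOrdered g q π')
    (hmaj : ∀ t ∈ Set.Icc (0 : ℝ) 1, lorenz g q π' t ≤ lorenz g p π t) :
    ∃ G : Matrix (Fin n) (Fin n) ℝ, ColStochastic G ∧ G *ᵥ g = g ∧ G *ᵥ p = q := by
  classical
  set a : Fin n → ℝ := fun k => g (π k) with hadef
  set bb : Fin n → ℝ := fun k => g (π' k) with hbbdef
  set u : Fin n → ℝ := fun k => p (π k) with hudef
  set v : Fin n → ℝ := fun k => q (π' k) with hvdef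
  set S : ℕ → ℝ := TMcs (TMex a) with hSdef
  set T : ℕ → ℝ := TMcs (TMex bb) with hTdef
  have hapos : ∀ k, 0 < a k := fun k => hgpos (π k)
  have hbbpos : ∀ k, 0 < bb k := fun k => hgpos (π' k)
  have hSmono : Monotone S := TMcs_mono a fun k => (hapos k).le
  have hTmono : Monotone T := TMcs_mono bb fun k => (hbbpos k).le
  have hS0 : S 0 = 0 := by simp [hSdef, TMcs]
  have hT0 : T 0 = 0 := by simp [hTdef, TMcs]
  have hSn : S n = 1 := by
    rw [hSdef, TMcs, ← TMsum_univ, hadef, Equiv.sum_comp π g, hg.2]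
  have hTn : T n = 1 := by
    rw [hTdef, TMcs, ← TMsum_univ, hbbdef, Equiv.sum_comp π' g, hg.2]
  have hSnn : ∀ m, 0 ≤ S m := TMcs_nonneg a fun k => (hapos k).le
  have hTnn : ∀ m, 0 ≤ T m := TMcs_nonneg bb fun k => (hbbpos k).le
  have hSsucc : ∀ j : Fin n, S (j.1 + 1) = S j.1 + a j := by
    intro j
    rw [hSdef, TMcs, TMcs, Finset.sum_range_succ, TMex_apply]
  have hTsucc : ∀ i : Fin n, T (i.1 + 1) = T i.1 + bb i := by
    intro i
    rw [hTdef, TMcs, TMcs, Finset.sum_range_succ, TMex_apply]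
  have hSle1 : ∀ m, m ≤ n → S m ≤ 1 := fun m hm => hSn ▸ hSmono hm
  have hTle1 : ∀ m, m ≤ n → T m ≤ 1 := fun m hm => hTn ▸ hTmono hm
  set cf : ℕ → ℕ → ℝ := fun m l => max 0 (min (T (m + 1)) (S (l + 1)) - max (T m) (S l))
    with hcfdef
  set c : Matrix (Fin n) (Fin n) ℝ := fun i j => cf i.1 j.1 with hcdef
  have hc0 : ∀ i j, 0 ≤ c i j := fun i j => le_max_left _ _
  -- column partial sums of c
  have hcolp : ∀ (j : Fin n) (k : ℕ), ∑ m ∈ Finset.range k, cf m j.1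
      = min (max (T k) (S j.1)) (S (j.1 + 1)) - S j.1 := by
    intro j k
    have h1 : ∀ m ∈ Finset.range k, cf m j.1
        = min (max (T (m + 1)) (S j.1)) (S (j.1 + 1)) - min (max (T m) (S j.1)) (S (j.1 + 1)) := by
      intro m _
      exact TMclamp (T m) (T (m + 1)) (S j.1) (S (j.1 + 1))
        (hTmono (Nat.le_succ m)) (hSmono (Nat.le_succ j.1))
    rw [Finset.sum_congr rfl h1,
      Finset.sum_range_sub (fun m => min (max (T m) (S j.1)) (S (j.1 + 1))), hT0]
    have h2 : min (max (0:ℝ) (S j.1)) (S (j.1 + 1)) = S j.1 := by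
      rw [max_eq_right (hSnn j.1), min_eq_left (hSmono (Nat.le_succ j.1))]
    rw [h2]
  -- column sums of c
  have hcol : ∀ j : Fin n, ∑ i, c i j = a j := by
    intro j
    have h0 : ∑ i : Fin n, c i j = ∑ m ∈ Finset.range n, cf m j.1 :=
      Fin.sum_univ_eq_sum_range (fun m => cf m j.1) n
    rw [h0, hcolp j n, hTn]
    have h2 : max (1:ℝ) (S j.1) = 1 := max_eq_left (hSle1 j.1 j.2.le)
    have h3 : min (1:ℝ) (S (j.1 + 1)) = S (j.1 + 1) := min_eq_right (hSle1 _ j.2)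
    rw [h2, h3, hSsucc j]
    ring
  -- row sums of c
  have hrow : ∀ i : Fin n, ∑ j, c i j = bb i := by
    intro i
    have hsym : ∀ j : Fin n, c i j
        = max 0 (min (S (j.1 + 1)) (T (i.1 + 1)) - max (S j.1) (T i.1)) := by
      intro j
      rw [hcdef]
      simp only [hcfdef]
      rw [min_comm (T (i.1+1)) (S (j.1+1)), max_comm (T i.1) (S j.1)]
    have h0 : ∑ j : Fin n, c i j
        = ∑ m ∈ Finset.range n, max 0 (min (S (m + 1)) (T (i.1 + 1)) - max (S m) (T i.1)) := by
      rw [Finset.sum_congr rfl fun j _ => hsym j]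
      exact Fin.sum_univ_eq_sum_range (fun m => max 0 (min (S (m+1)) (T (i.1+1)) - max (S m) (T i.1))) n
    have h1 : ∀ m ∈ Finset.range n, max 0 (min (S (m + 1)) (T (i.1 + 1)) - max (S m) (T i.1))
        = min (max (S (m + 1)) (T i.1)) (T (i.1 + 1)) - min (max (S m) (T i.1)) (T (i.1 + 1)) := by
      intro m _
      exact TMclamp (S m) (S (m + 1)) (T i.1) (T (i.1 + 1))
        (hSmono (Nat.le_succ m)) (hTmono (Nat.le_succ i.1))
    rw [h0, Finset.sum_congr rfl h1,
      Finset.sum_range_sub (fun m => min (max (S m) (T i.1)) (T (i.1 + 1))), hSn, hS0]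
    have h2 : min (max (0:ℝ) (T i.1)) (T (i.1 + 1)) = T i.1 := by
      rw [max_eq_right (hTnn i.1), min_eq_left (hTmono (Nat.le_succ i.1))]
    have h3 : min (max (1:ℝ) (T i.1)) (T (i.1 + 1)) = T (i.1 + 1) := by
      rw [max_eq_left (hTle1 i.1 i.2.le), min_eq_right (hTle1 _ i.2)]
    rw [h2, h3, hTsucc i]
    ring
  set r : Fin n → ℝ := fun j => u j / a j with hrdef
  set ut : Fin n → ℝ := fun i => ∑ j, r j * c i j with hutdef
  -- the rebinning matrix H
  set H : Matrix (Fin n) (Fin n) ℝ := fun i j => c i j / a j with hHdef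
  have hHcs : ColStochastic H := by
    constructor
    · intro i j
      exact div_nonneg (hc0 i j) (hapos j).le
    · intro j
      simp only [hHdef]
      rw [← Finset.sum_div, hcol j, div_self (hapos j).ne']
  have hHa : H *ᵥ a = bb := by
    funext i
    show ∑ j, H i j * a j = bb i
    rw [← hrow i]
    refine Finset.sum_congr rfl fun j _ => ?_
    simp only [hHdef]
    exact div_mul_cancel₀ (c i j) (hapos j).ne'
  have hHu : H *ᵥ u = ut := by
    funext i
    show ∑ j, H i j * u j = ut i
    simp only [hutdef, hHdef, hrdef]
    refine Finset.sum_congr rfl fun j _ => ?_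
    rw [div_mul_eq_mul_div, div_mul_eq_mul_div, mul_comm]
  -- ratio antitonicity
  have hrant : ∀ (j j' : Fin n), j ≤ j' → r j' ≤ r j := fun j j' h => hπ j j' h
  -- support ordering
  have hsupp : ∀ (k l : Fin n), k < l → ∀ (j j' : Fin n), 0 < c k j → 0 < c l j' → j ≤ j' := by
    intro k l hkl j j' hcj hcj'
    by_contra h
    have hj' : j'.1 + 1 ≤ j.1 := not_le.mp h
    have hX : 0 < min (T (k.1 + 1)) (S (j.1 + 1)) - max (T k.1) (S j.1) := by
      rcases lt_max_iff.mp hcj with h0 | h0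
      · exact absurd h0 (lt_irrefl 0)
      · exact h0
    have hX' : 0 < min (T (l.1 + 1)) (S (j'.1 + 1)) - max (T l.1) (S j'.1) := by
      rcases lt_max_iff.mp hcj' with h0 | h0
      · exact absurd h0 (lt_irrefl 0)
      · exact h0
    have h1 : S j.1 < T (k.1 + 1) :=
      lt_of_le_of_lt (le_max_right (T k.1) (S j.1)) (lt_of_lt_of_le (by linarith) (min_le_left _ _))
    have h2 : T l.1 < S (j'.1 + 1) :=
      lt_of_le_of_lt (le_max_left (T l.1) (S j'.1)) (lt_of_lt_of_le (by linarith) (min_le_right _ _))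
    have h3 : T (k.1 + 1) ≤ T l.1 := hTmono hkl
    have h4 : S (j'.1 + 1) ≤ S j.1 := hSmono hj'
    linarith
  -- sortedness of ut
  have hut_sorted : ∀ (k l : Fin n), k ≤ l → ut l / bb l ≤ ut k / bb k := by
    intro k l hkl
    rcases eq_or_lt_of_le hkl with heq | hlt
    · rw [heq]
    · rw [div_le_div_iff₀ (hbbpos l) (hbbpos k)]
      have e1 : ut l * bb k = ∑ j' : Fin n, ∑ j : Fin n, r j' * c l j' * c k j := by
        rw [← hrow k]
        simp only [hutdef]
        rw [Finset.sum_mul]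
        exact Finset.sum_congr rfl fun j' _ => Finset.mul_sum _ _ _
      have e2 : ut k * bb l = ∑ j : Fin n, ∑ j' : Fin n, r j * c k j * c l j' := by
        rw [← hrow l]
        simp only [hutdef]
        rw [Finset.sum_mul]
        exact Finset.sum_congr rfl fun j _ => Finset.mul_sum _ _ _
      rw [e1, e2, Finset.sum_comm]
      refine Finset.sum_le_sum fun j _ => Finset.sum_le_sum fun j' _ => ?_
      rcases (hc0 k j).lt_or_eq with hckj | hckj
      · rcases (hc0 l j').lt_or_eq with hclj | hclj
        · have hle : j ≤ j' := hsupp k l hlt j j' hckj hclj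
          nlinarith [mul_le_mul_of_nonneg_right (hrant j j' hle) (mul_nonneg (hc0 k j) (hc0 l j'))]
        · rw [← hclj]
          simp
      · rw [← hckj]
        simp
  -- partial sums of ut equal the Lorenz curve of p at T k
  have hPSut : ∀ k : ℕ, k ≤ n → ∑ m ∈ Finset.range k, TMex ut m = lorenz g p π (T k) := by
    intro k hk
    have h1 : ∑ m ∈ Finset.range k, TMex ut m
        = ∑ m ∈ Finset.range k, ∑ j : Fin n, r j * cf m j.1 := by
      refine Finset.sum_congr rfl fun m hm => ?_
      have hmn : m < n := lt_of_lt_of_le (Finset.mem_range.mp hm) hk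
      rw [TMex_lt _ hmn]
    rw [h1, Finset.sum_comm]
    unfold lorenz
    refine Finset.sum_congr rfl fun j _ => ?_
    rw [← Finset.mul_sum, hcolp j k, TMsum_filter_lt (fun j => g (π j)) j]
    have h2 : min (max (T k) (S j.1)) (S (j.1 + 1)) - S j.1
        = min (max (T k - S j.1) 0) (a j) := by
      rw [hSsucc j]
      exact TMclamp2 (T k) (S j.1) (a j) (hapos j).le
    rw [h2]
    rfl
  -- Lorenz curve of q at T k equals partial sums of v
  have hPSv : ∀ k : ℕ, k ≤ n → lorenz g q π' (T k) = ∑ m ∈ Finset.range k, TMex v m := by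
    intro k hk
    unfold lorenz
    have h1 : ∀ j : Fin n, (q (π' j) / g (π' j)) *
        min (max (T k - ∑ j' ∈ Finset.univ.filter (fun j' => j' < j), g (π' j')) 0) (g (π' j))
        = (if (j : ℕ) < k then v j else 0) := by
      intro j
      rw [TMsum_filter_lt (fun j => g (π' j)) j]
      have hTj : ∑ m ∈ Finset.range j.1, TMex (fun j => g (π' j)) m = T j.1 := rfl
      rw [hTj]
      by_cases hjk : j.1 < k
      · rw [if_pos hjk]
        have h2 : T j.1 + bb j ≤ T k := by
          rw [← hTsucc j]
          exact hTmono hjk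
        have hbbj : bb j = g (π' j) := rfl
        have h3 : min (max (T k - T j.1) 0) (g (π' j)) = g (π' j) := by
          rw [max_eq_left (by linarith [hbbpos j]), min_eq_right (by linarith [hbbpos j])]
        rw [h3]
        exact div_mul_cancel₀ (q (π' j)) (hgpos (π' j)).ne'
      · rw [if_neg hjk]
        have h2 : T k ≤ T j.1 := hTmono (not_lt.mp hjk)
        have h3 : min (max (T k - T j.1) 0) (g (π' j)) = 0 := by
          rw [max_eq_right (by linarith), min_eq_left (hgpos (π' j)).le]
        rw [h3, mul_zero]
    rw [Finset.sum_congr rfl fun j _ => h1 j, TMsum_vlt v hk]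
  have hps_core : ∀ k : ℕ, k ≤ n →
      ∑ m ∈ Finset.range k, TMex v m ≤ ∑ m ∈ Finset.range k, TMex ut m := by
    intro k hk
    rw [hPSut k hk, ← hPSv k hk]
    exact hmaj (T k) ⟨hTnn k, hTle1 k hk⟩
  have htot_core : ∑ m, ut m = ∑ m, v m := by
    have h1 : ∑ m, ut m = ∑ j, r j * a j := by
      simp only [hutdef]
      rw [Finset.sum_comm]
      exact Finset.sum_congr rfl fun j _ => by rw [← Finset.mul_sum, hcol j]
    have h2 : ∀ j : Fin n, r j * a j = u j := fun j => div_mul_cancel₀ (u j) (hapos j).ne'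
    rw [h1, Finset.sum_congr rfl fun j _ => h2 j]
    simp only [hudef, hvdef]
    rw [Equiv.sum_comp π p, Equiv.sum_comp π' q, hp.2, hq.2]
  have hcard : (Finset.univ.filter (fun m => ut m ≠ v m)).card ≤ n := by
    refine le_trans (Finset.card_filter_le _ _) ?_
    simp
  obtain ⟨M, hMcs, hMb, hMu⟩ := TMcore bb hbbpos v (fun k l h => hπ' k l h) n ut hcard
    hut_sorted hps_core htot_core
  set K : Matrix (Fin n) (Fin n) ℝ := M * H with hKdef
  have hKcs : ColStochastic K := TMmul_colStoch hMcs hHcs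
  have hKa : K *ᵥ a = bb := by rw [hKdef, ← Matrix.mulVec_mulVec, hHa, hMb]
  have hKu : K *ᵥ u = v := by rw [hKdef, ← Matrix.mulVec_mulVec, hHu, hMu]
  refine ⟨fun i j => K (π'.symm i) (π.symm j), ⟨fun i j => hKcs.1 _ _, ?_⟩, ?_, ?_⟩
  · intro j
    exact (Equiv.sum_comp π'.symm (fun i' => K i' (π.symm j))).trans (hKcs.2 _)
  · funext i
    show ∑ j, K (π'.symm i) (π.symm j) * g j = g i
    have h1 : ∑ j, K (π'.symm i) (π.symm j) * g j = ∑ j', K (π'.symm i) j' * a j' := by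
      rw [← Equiv.sum_comp π (fun j => K (π'.symm i) (π.symm j) * g j)]
      refine Finset.sum_congr rfl fun j' _ => ?_
      rw [Equiv.symm_apply_apply]
    calc ∑ j, K (π'.symm i) (π.symm j) * g j = ∑ j', K (π'.symm i) j' * a j' := h1
      _ = (K *ᵥ a) (π'.symm i) := rfl
      _ = bb (π'.symm i) := by rw [hKa]
      _ = g i := by simp only [hbbdef]; rw [Equiv.apply_symm_apply]
  · funext i
    show ∑ j, K (π'.symm i) (π.symm j) * p j = q i
    have h1 : ∑ j, K (π'.symm i) (π.symm j) * p j = ∑ j', K (π'.symm i) j' * u j' := by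
      rw [← Equiv.sum_comp π (fun j => K (π'.symm i) (π.symm j) * p j)]
      refine Finset.sum_congr rfl fun j' _ => ?_
      rw [Equiv.symm_apply_apply]
    calc ∑ j, K (π'.symm i) (π.symm j) * p j = ∑ j', K (π'.symm i) j' * u j' := h1
      _ = (K *ᵥ u) (π'.symm i) := rfl
      _ = v (π'.symm i) := by rw [hKu]
      _ = q i := by simp only [hvdef]; rw [Equiv.apply_symm_apply]


/-- There is a Gibbs-preserving column-stochastic matrix mapping `p` to `q` if and only if
`p` thermo-majorizes `q` relative to `g`. -/
theorem stmt3 {n : ℕ} (g p q : Fin n → ℝ)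
    (hg : IsProbVec g) (hgpos : ∀ i, 0 < g i)
    (hp : IsProbVec p) (hq : IsProbVec q) :
    (∃ G : Matrix (Fin n) (Fin n) ℝ, ColStochastic G ∧ G *ᵥ g = g ∧ G *ᵥ p = q) ↔
    ThermoMaj g p q := by
  constructor
  · rintro ⟨G, hGcs, hGg, hGp⟩
    obtain ⟨π, hπ⟩ := TMexists_betaOrdered g p
    obtain ⟨π', hπ'⟩ := TMexists_betaOrdered g q
    exact ⟨π, π', hπ, hπ', fun t ht =>
      TMforward g p q hg hgpos G hGcs hGg hGp π π' hπ t ht.1 ht.2⟩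
  · rintro ⟨π, π', hπ, hπ', hmaj⟩
    exact TMbackward g p q hg hgpos hp hq π π' hπ hπ' hmaj
end

section
/- Let g be a probability vector on Fin n with strictly positive entries and let p, q be probability vectors on Fin n. Then p thermo-majorizes q relative to g if and only if for every real a ≥ 0 one has ∑_{j=1}^n g_j |q_j/g_j − a| ≤ ∑_{j=1}^n g_j |p_j/g_j − a|. -/
namespace ThermoAux

open Finset

variable {n : ℕ}

/-- Partial sums of `g ∘ π`, indexed by `ℕ`. -/
noncomputable def S (g : Fin n → ℝ) (π : Equiv.Perm (Fin n)) (j : ℕ) : ℝ :=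
  ∑ i ∈ Finset.range j, if h : i < n then g (π ⟨i, h⟩) else 0

lemma S_mono (g : Fin n → ℝ) (π : Equiv.Perm (Fin n)) (hg0 : ∀ i, 0 ≤ g i) :
    Monotone (S g π) := by
  intro j l hjl
  apply Finset.sum_le_sum_of_subset_of_nonneg (Finset.range_subset_range.mpr hjl)
  intro i _ _
  by_cases h : i < n
  · simp only [dif_pos h]; exact hg0 _
  · simp [h]

lemma S_zero (g : Fin n → ℝ) (π : Equiv.Perm (Fin n)) : S g π 0 = 0 := by simp [S]

lemma S_succ (g : Fin n → ℝ) (π : Equiv.Perm (Fin n)) (k : Fin n) :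
    S g π (k.1 + 1) = S g π k.1 + g (π k) := by
  unfold S
  rw [Finset.sum_range_succ, dif_pos k.isLt]

lemma S_n (g : Fin n → ℝ) (π : Equiv.Perm (Fin n)) (hg1 : ∑ i, g i = 1) :
    S g π n = 1 := by
  unfold S
  rw [← Fin.sum_univ_eq_sum_range (fun i => if h : i < n then g (π ⟨i, h⟩) else 0) n]
  calc ∑ i : Fin n, (if h : (i : ℕ) < n then g (π ⟨i, h⟩) else 0)
      = ∑ i : Fin n, g (π i) := by
        apply Finset.sum_congr rfl; intro i _; rw [dif_pos i.isLt]
    _ = 1 := by rw [Equiv.sum_comp π g, hg1]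

lemma s_eq (g : Fin n → ℝ) (π : Equiv.Perm (Fin n)) (k : Fin n) :
    ∑ j ∈ Finset.univ.filter (fun j => j < k), g (π j) = S g π k.1 := by
  rw [Finset.sum_filter]
  have h1 : ∀ j : Fin n, (if j < k then g (π j) else 0)
      = (fun i : ℕ => if h : i < n then (if i < k.1 then g (π ⟨i, h⟩) else 0) else 0) j.1 := by
    intro j
    simp only [dif_pos j.isLt, Fin.eta, Fin.lt_def]
  rw [Finset.sum_congr rfl (fun j _ => h1 j),
    Fin.sum_univ_eq_sum_range (fun i => if h : i < n then (if i < k.1 then g (π ⟨i, h⟩) else 0) else 0) n]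
  rw [← Finset.sum_subset (Finset.range_subset_range.mpr k.isLt.le) (by
    intro x hx hnx
    simp only [Finset.mem_range] at hx hnx
    rw [dif_pos hx, if_neg hnx])]
  unfold S
  apply Finset.sum_congr rfl
  intro i hi
  have h2 : i < k.1 := Finset.mem_range.mp hi
  have h3 : i < n := h2.trans k.isLt
  rw [dif_pos h3, if_pos h2, dif_pos h3]

lemma sum_m (g : Fin n → ℝ) (π : Equiv.Perm (Fin n)) (hg0 : ∀ i, 0 ≤ g i)
    (hg1 : ∑ i, g i = 1) {t : ℝ} (ht : t ∈ Set.Icc (0 : ℝ) 1) :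
    ∑ k : Fin n, min (max (t - S g π k.1) 0) (g (π k)) = t := by
  have key : ∀ k : Fin n, min (max (t - S g π k.1) 0) (g (π k))
      = (fun i : ℕ => min t (S g π (i + 1)) - min t (S g π i)) k.1 := by
    intro k
    simp only
    rw [S_succ]
    set s := S g π k.1 with hs
    have hgk : 0 ≤ g (π k) := hg0 _
    rcases le_total t s with h | h
    · rw [max_eq_right (by linarith), min_eq_left hgk,
        min_eq_left (show t ≤ s + g (π k) by linarith), min_eq_left h]
      ring
    · rcases le_total t (s + g (π k)) with h2 | h2
      · rw [max_eq_left (by linarith), min_eq_left (by linarith), min_eq_left h2,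
          min_eq_right h]
      · rw [max_eq_left (by linarith), min_eq_right (by linarith), min_eq_right h2,
          min_eq_right h]
        ring
  rw [Finset.sum_congr rfl (fun k _ => key k),
    Fin.sum_univ_eq_sum_range (fun i => min t (S g π (i + 1)) - min t (S g π i)) n,
    Finset.sum_range_sub (fun i => min t (S g π i)) n, S_n g π hg1, S_zero,
    min_eq_left ht.2, min_eq_right ht.1, sub_zero]

lemma lorenz_eq (g p : Fin n → ℝ) (π : Equiv.Perm (Fin n)) (hg0 : ∀ i, 0 ≤ g i)
    (hg1 : ∑ i, g i = 1) {t : ℝ} (ht : t ∈ Set.Icc (0 : ℝ) 1) (a : ℝ) :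
    lorenz g p π t - a * t
      = ∑ k : Fin n, (p (π k) / g (π k) - a) * min (max (t - S g π k.1) 0) (g (π k)) := by
  have h1 : lorenz g p π t
      = ∑ k : Fin n, (p (π k) / g (π k)) * min (max (t - S g π k.1) 0) (g (π k)) := by
    unfold lorenz
    exact Finset.sum_congr rfl (fun k _ => by rw [s_eq])
  simp only [sub_mul]
  rw [Finset.sum_sub_distrib, ← h1, ← Finset.mul_sum, sum_m g π hg0 hg1 ht]

lemma F_eq (g p : Fin n → ℝ) (π : Equiv.Perm (Fin n)) (hgpos : ∀ i, 0 < g i) (a : ℝ) :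
    ∑ k : Fin n, max ((p (π k) / g (π k) - a) * g (π k)) 0
      = ∑ j, max (p j - a * g j) 0 := by
  rw [← Equiv.sum_comp π (fun j => max (p j - a * g j) 0)]
  apply Finset.sum_congr rfl
  intro k _
  rw [sub_mul, div_mul_cancel₀ _ (hgpos (π k)).ne']

/-- upper bound: the Lorenz curve lies below every "Legendre" line. -/
lemma lorenz_le (g p : Fin n → ℝ) (π : Equiv.Perm (Fin n)) (hgpos : ∀ i, 0 < g i)
    (hg1 : ∑ i, g i = 1) {t : ℝ} (ht : t ∈ Set.Icc (0 : ℝ) 1) (a : ℝ) :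
    lorenz g p π t ≤ (∑ j, max (p j - a * g j) 0) + a * t := by
  have hg0 : ∀ i, 0 ≤ g i := fun i => (hgpos i).le
  have h1 := lorenz_eq g p π hg0 hg1 ht a
  rw [← F_eq g p π hgpos a]
  have h2 : ∀ k : Fin n, (p (π k) / g (π k) - a) * min (max (t - S g π k.1) 0) (g (π k))
      ≤ max ((p (π k) / g (π k) - a) * g (π k)) 0 := by
    intro k
    have hm0 : 0 ≤ min (max (t - S g π k.1) 0) (g (π k)) :=
      le_min (le_max_right _ _) (hg0 _)
    have hmg : min (max (t - S g π k.1) 0) (g (π k)) ≤ g (π k) := min_le_right _ _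
    rcases le_total a (p (π k) / g (π k)) with h | h
    · exact le_trans (mul_le_mul_of_nonneg_left hmg (by linarith)) (le_max_left _ _)
    · refine le_trans ?_ (le_max_right _ _)
      exact mul_nonpos_of_nonpos_of_nonneg (by linarith) hm0
  have h3 : lorenz g p π t - a * t ≤ ∑ k : Fin n, max ((p (π k) / g (π k) - a) * g (π k)) 0 := by
    rw [h1]; exact Finset.sum_le_sum (fun k _ => h2 k)
  linarith

/-- If termwise equality holds, the Lorenz curve touches the Legendre line. -/
lemma key_eq (g p : Fin n → ℝ) (π : Equiv.Perm (Fin n)) (hgpos : ∀ i, 0 < g i)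
    (hg1 : ∑ i, g i = 1) {t : ℝ} (ht : t ∈ Set.Icc (0 : ℝ) 1) (a : ℝ)
    (h : ∀ k : Fin n, (p (π k) / g (π k) - a) * min (max (t - S g π k.1) 0) (g (π k))
      = max ((p (π k) / g (π k) - a) * g (π k)) 0) :
    lorenz g p π t = (∑ j, max (p j - a * g j) 0) + a * t := by
  have hg0 : ∀ i, 0 ≤ g i := fun i => (hgpos i).le
  have h1 := lorenz_eq g p π hg0 hg1 ht a
  rw [Finset.sum_congr rfl (fun k _ => h k), F_eq g p π hgpos a] at h1
  linarith

lemma exists_K (g : Fin n → ℝ) (π : Equiv.Perm (Fin n)) (hg0 : ∀ i, 0 ≤ g i)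
    (hg1 : ∑ i, g i = 1) (hn : 0 < n) {t : ℝ} (ht : t ∈ Set.Icc (0 : ℝ) 1) :
    ∃ K : Fin n, S g π K.1 ≤ t ∧ t ≤ S g π (K.1 + 1) := by
  classical
  have hne : ((Finset.range n).filter (fun j => S g π j ≤ t)).Nonempty := by
    refine ⟨0, ?_⟩
    simp only [Finset.mem_filter, Finset.mem_range]
    exact ⟨hn, by rw [S_zero]; exact ht.1⟩
  set Ks := (Finset.range n).filter (fun j => S g π j ≤ t)
  have hKmem := Ks.max'_mem hne
  simp only [Ks, Finset.mem_filter, Finset.mem_range] at hKmem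
  refine ⟨⟨Ks.max' hne, hKmem.1⟩, hKmem.2, ?_⟩
  rcases eq_or_lt_of_le (Nat.succ_le_of_lt hKmem.1) with h | h
  · simp only []
    rw [show Ks.max' hne + 1 = n from h, S_n g π hg1]
    exact ht.2
  · by_contra hc
    push_neg at hc
    have hmem : Ks.max' hne + 1 ∈ Ks := by
      simp only [Ks, Finset.mem_filter, Finset.mem_range]
      exact ⟨h, hc.le⟩
    have := Ks.le_max' _ hmem
    omega

/-- Touching from above: at each point the Lorenz curve meets some Legendre line. -/
lemma exists_tangent (g p : Fin n → ℝ) (π : Equiv.Perm (Fin n)) (hgpos : ∀ i, 0 < g i)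
    (hp0 : ∀ i, 0 ≤ p i) (hg1 : ∑ i, g i = 1) (hβ : BetaOrdered g p π) (hn : 0 < n)
    {t : ℝ} (ht : t ∈ Set.Icc (0 : ℝ) 1) :
    ∃ a : ℝ, 0 ≤ a ∧ lorenz g p π t = (∑ j, max (p j - a * g j) 0) + a * t := by
  have hg0 : ∀ i, 0 ≤ g i := fun i => (hgpos i).le
  obtain ⟨K, hK1, hK2⟩ := exists_K g π hg0 hg1 hn ht
  set a := p (π K) / g (π K) with ha
  have ha0 : 0 ≤ a := div_nonneg (hp0 _) (hg0 _)
  refine ⟨a, ha0, key_eq g p π hgpos hg1 ht a ?_⟩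
  intro k
  rcases lt_trichotomy k.1 K.1 with h | h | h
  · have hra : a ≤ p (π k) / g (π k) := hβ k K (Fin.le_def.mpr h.le)
    have hm : min (max (t - S g π k.1) 0) (g (π k)) = g (π k) := by
      have h1 : S g π (k.1 + 1) ≤ S g π K.1 := S_mono g π hg0 (by omega)
      rw [S_succ] at h1
      have h2 : g (π k) ≤ t - S g π k.1 := by linarith
      rw [max_eq_left (le_trans (hg0 _) h2), min_eq_right h2]
    rw [hm, max_eq_left (mul_nonneg (by linarith) (hg0 _))]
  · have hk : k = K := Fin.ext h
    rw [hk, ← ha, sub_self, zero_mul, zero_mul, max_self]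
  · have hra : p (π k) / g (π k) ≤ a := hβ K k (Fin.le_def.mpr h.le)
    have hm : min (max (t - S g π k.1) 0) (g (π k)) = 0 := by
      have h1 : S g π (K.1 + 1) ≤ S g π k.1 := S_mono g π hg0 (by omega)
      rw [max_eq_right (by linarith), min_eq_left (hg0 _)]
    rw [hm, mul_zero, eq_comm]
    exact max_eq_right (mul_nonpos_of_nonpos_of_nonneg (by linarith) (hg0 _))

/-- Touching from below: each Legendre value is attained on the Lorenz curve. -/
lemma exists_touch (g q : Fin n → ℝ) (π : Equiv.Perm (Fin n)) (hgpos : ∀ i, 0 < g i)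
    (hg1 : ∑ i, g i = 1) (hβ : BetaOrdered g q π) (hn : 0 < n) (a : ℝ) :
    ∃ t ∈ Set.Icc (0 : ℝ) 1,
      (∑ j, max (q j - a * g j) 0) + a * t = lorenz g q π t := by
  classical
  have hg0 : ∀ i, 0 ≤ g i := fun i => (hgpos i).le
  by_cases hT : ∃ k : Fin n, q (π k) / g (π k) ≤ a
  · set T := Finset.univ.filter (fun k : Fin n => q (π k) / g (π k) ≤ a) with hTdef
    have hTne : T.Nonempty := by
      obtain ⟨k, hk⟩ := hT
      exact ⟨k, by rw [hTdef, Finset.mem_filter]; exact ⟨Finset.mem_univ _, hk⟩⟩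
    set K := T.min' hTne with hK
    have hKmem : K ∈ T := T.min'_mem hTne
    rw [hTdef, Finset.mem_filter] at hKmem
    have hKle : q (π K) / g (π K) ≤ a := hKmem.2
    set t := S g π K.1 with htdef
    have ht : t ∈ Set.Icc (0 : ℝ) 1 := by
      constructor
      · rw [htdef, ← S_zero g π]; exact S_mono g π hg0 (Nat.zero_le _)
      · rw [htdef, ← S_n g π hg1]; exact S_mono g π hg0 K.isLt.le
    refine ⟨t, ht, (key_eq g q π hgpos hg1 ht a ?_).symm⟩
    intro k
    rcases lt_or_ge k K with h | h
    · have hkT : k ∉ T := fun hk => absurd (T.min'_le _ hk) (not_le.mpr h)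
      rw [hTdef, Finset.mem_filter] at hkT
      push_neg at hkT
      have hra : a < q (π k) / g (π k) := hkT (Finset.mem_univ _)
      have hm : min (max (t - S g π k.1) 0) (g (π k)) = g (π k) := by
        have h1 : S g π (k.1 + 1) ≤ S g π K.1 := S_mono g π hg0 (Fin.lt_def.mp h)
        rw [S_succ] at h1
        have h2 : g (π k) ≤ t - S g π k.1 := by rw [htdef]; linarith
        rw [max_eq_left (le_trans (hg0 _) h2), min_eq_right h2]
      rw [hm, max_eq_left (mul_nonneg (by linarith) (hg0 _))]
    · have hra : q (π k) / g (π k) ≤ a := le_trans (hβ K k h) hKle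
      have hm : min (max (t - S g π k.1) 0) (g (π k)) = 0 := by
        have h1 : S g π K.1 ≤ S g π k.1 := S_mono g π hg0 (Fin.le_def.mp h)
        rw [max_eq_right (by rw [htdef]; linarith), min_eq_left (hg0 _)]
      rw [hm, mul_zero, eq_comm]
      exact max_eq_right (mul_nonpos_of_nonpos_of_nonneg (by linarith) (hg0 _))
  · push_neg at hT
    refine ⟨1, by constructor <;> norm_num, (key_eq g q π hgpos hg1
      (by constructor <;> norm_num) a ?_).symm⟩
    intro k
    have hra : a < q (π k) / g (π k) := hT k
    have hm : min (max ((1 : ℝ) - S g π k.1) 0) (g (π k)) = g (π k) := by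
      have h1 : S g π (k.1 + 1) ≤ S g π n := S_mono g π hg0 k.isLt
      rw [S_succ, S_n g π hg1] at h1
      have h2 : g (π k) ≤ 1 - S g π k.1 := by linarith
      rw [max_eq_left (le_trans (hg0 _) h2), min_eq_right h2]
    rw [hm, max_eq_left (mul_nonneg (by linarith) (hg0 _))]

lemma abs_sum_eq (g p : Fin n → ℝ) (hgpos : ∀ i, 0 < g i) (hp : IsProbVec p)
    (hg1 : ∑ i, g i = 1) (a : ℝ) :
    ∑ j, g j * |p j / g j - a| = 2 * (∑ j, max (p j - a * g j) 0) - (1 - a) := by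
  have h1 : ∀ j, g j * |p j / g j - a| = 2 * max (p j - a * g j) 0 - (p j - a * g j) := by
    intro j
    have hg := hgpos j
    have h2 : g j * |p j / g j - a| = |p j - a * g j| := by
      rw [show p j - a * g j = g j * (p j / g j - a) from by
        rw [mul_sub, mul_div_cancel₀ _ hg.ne']; ring, abs_mul, abs_of_pos hg]
    rw [h2]
    rcases le_total (p j - a * g j) 0 with h | h
    · rw [abs_of_nonpos h, max_eq_right h]; ring
    · rw [abs_of_nonneg h, max_eq_left h]; ring
  rw [Finset.sum_congr rfl (fun j _ => h1 j), Finset.sum_sub_distrib, ← Finset.mul_sum]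
  have h3 : ∑ j, (p j - a * g j) = 1 - a := by
    rw [Finset.sum_sub_distrib, hp.2, ← Finset.mul_sum, hg1, mul_one]
  rw [h3]

lemma betaOrdered_sort (g p : Fin n → ℝ) :
    BetaOrdered g p (Tuple.sort (fun i => -(p i / g i))) := by
  intro k l hkl
  have h := Tuple.monotone_sort (fun i => -(p i / g i)) hkl
  simp only [Function.comp_apply] at h
  linarith

end ThermoAux

/-- `p` thermo-majorizes `q` relative to `g` if and only if for all `a ≥ 0`,
`∑ j, g j * |q j / g j - a| ≤ ∑ j, g j * |p j / g j - a|`. -/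
theorem stmt4 {n : ℕ} (g p q : Fin n → ℝ)
    (hg : IsProbVec g) (hgpos : ∀ i, 0 < g i)
    (hp : IsProbVec p) (hq : IsProbVec q) :
    ThermoMaj g p q ↔
    ∀ a : ℝ, 0 ≤ a →
      ∑ j, g j * |q j / g j - a| ≤ ∑ j, g j * |p j / g j - a| := by
  have hn : 0 < n := by
    rcases Nat.eq_zero_or_pos n with h | h
    · exfalso
      subst h
      simpa using hp.2
    · exact h
  constructor
  · rintro ⟨π, π', hβp, hβq, hle⟩ a ha
    rw [ThermoAux.abs_sum_eq g q hgpos hq hg.2 a, ThermoAux.abs_sum_eq g p hgpos hp hg.2 a]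
    obtain ⟨t, ht, heq⟩ := ThermoAux.exists_touch g q π' hgpos hg.2 hβq hn a
    have h1 := hle t ht
    have h2 := ThermoAux.lorenz_le g p π hgpos hg.2 ht a
    linarith
  · intro hF
    refine ⟨Tuple.sort (fun i => -(p i / g i)), Tuple.sort (fun i => -(q i / g i)),
      ThermoAux.betaOrdered_sort g p, ThermoAux.betaOrdered_sort g q, ?_⟩
    intro t ht
    obtain ⟨a, ha0, heq⟩ := ThermoAux.exists_tangent g p
      (Tuple.sort (fun i => -(p i / g i))) hgpos hp.1 hg.2
      (ThermoAux.betaOrdered_sort g p) hn ht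
    have h1 := ThermoAux.lorenz_le g q
      (Tuple.sort (fun i => -(q i / g i))) hgpos hg.2 ht a
    have h2 := hF a ha0
    rw [ThermoAux.abs_sum_eq g q hgpos hq hg.2 a,
      ThermoAux.abs_sum_eq g p hgpos hp hg.2 a] at h2
    linarith
end

section
/- Let d_1, …, d_n be positive integers, D = ∑_i d_i, and let g be the probability vector with g_i = d_i/D. For probability vectors p, q on Fin n, p thermo-majorizes q relative to g if and only if the embedded vector Γ(p) ∈ ℝ^D majorizes Γ(q) ∈ ℝ^D. -/
/-- Majorization of equal-sum vectors indexed by a finite type: `x` majorizes `y` if they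
have the same total sum and, for every `k`, the sum of the `k` largest entries of `x` is
at least the sum of the `k` largest entries of `y` (equivalently, every `k`-element sum of
`y` is dominated by some `k`-element sum of `x`). -/
def Majorizes {ι : Type*} [Fintype ι] (x y : ι → ℝ) : Prop :=
  (∑ j, x j = ∑ j, y j) ∧
  ∀ S : Finset ι, ∃ S' : Finset ι, S'.card = S.card ∧ ∑ j ∈ S, y j ≤ ∑ j ∈ S', x j


lemma minmax_eq (t c w : ℝ) (hw : 0 ≤ w) :
    min (max (t - c) 0) w = min t (c + w) - min t c := by
  simp only [min_def, max_def]
  split_ifs <;> linarith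

lemma abel_nonneg (N : ℕ) (r a : ℕ → ℝ)
    (hr : ∀ k l, k ≤ l → l < N → r l ≤ r k)
    (hr0 : ∀ k, k < N → 0 ≤ r k)
    (ha : ∀ K, K ≤ N → 0 ≤ ∑ k ∈ Finset.range K, a k) :
    0 ≤ ∑ k ∈ Finset.range N, r k * a k := by
  induction N generalizing r with
  | zero => simp
  | succ N ih =>
    have key : ∑ k ∈ Finset.range (N+1), r k * a k
        = (∑ k ∈ Finset.range N, (r k - r N) * a k) + r N * ∑ k ∈ Finset.range (N+1), a k := by
      rw [Finset.mul_sum, Finset.sum_range_succ (f := fun i => r N * a i),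
        Finset.sum_range_succ (f := fun k => r k * a k), ← add_assoc, ← Finset.sum_add_distrib]
      congr 1
      apply Finset.sum_congr rfl
      intro k _; ring
    rw [key]
    have h1 : 0 ≤ ∑ k ∈ Finset.range N, (r k - r N) * a k := by
      apply ih
      · intro k l hkl hl
        have := hr k l hkl (by omega); linarith
      · intro k hk
        have := hr k N (by omega) (by omega); linarith
      · intro K hK; exact ha K (by omega)
    have h2 : 0 ≤ r N * ∑ k ∈ Finset.range (N+1), a k :=
      mul_nonneg (hr0 N (by omega)) (ha (N+1) le_rfl)
    linarith

lemma greedy_sum (t : ℝ) (ht : 0 ≤ t) (gg : ℕ → ℝ) (K : ℕ)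
    (hgg : ∀ k, k < K → 0 ≤ gg k) :
    ∑ k ∈ Finset.range K, min (max (t - ∑ j ∈ Finset.range k, gg j) 0) (gg k)
      = min t (∑ j ∈ Finset.range K, gg j) := by
  induction K with
  | zero => simp [ht]
  | succ K ih =>
    rw [Finset.sum_range_succ, Finset.sum_range_succ (f := gg),
      ih (fun k hk => hgg k (by omega)),
      minmax_eq t _ _ (hgg K (by omega))]
    ring

lemma greedy_max (N : ℕ) (t : ℝ) (ht : 0 ≤ t) (r gg u : ℕ → ℝ)
    (hr : ∀ k l, k ≤ l → l < N → r l ≤ r k)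
    (hr0 : ∀ k, k < N → 0 ≤ r k)
    (hgg : ∀ k, k < N → 0 ≤ gg k)
    (hu0 : ∀ k, k < N → 0 ≤ u k)
    (hug : ∀ k, k < N → u k ≤ gg k)
    (hut : ∑ k ∈ Finset.range N, u k ≤ t) :
    ∑ k ∈ Finset.range N, r k * u k
      ≤ ∑ k ∈ Finset.range N, r k * min (max (t - ∑ j ∈ Finset.range k, gg j) 0) (gg k) := by
  have key : 0 ≤ ∑ k ∈ Finset.range N,
      r k * (min (max (t - ∑ j ∈ Finset.range k, gg j) 0) (gg k) - u k) := by
    apply abel_nonneg N r _ hr hr0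
    intro K hK
    rw [Finset.sum_sub_distrib, greedy_sum t ht gg K (fun k hk => hgg k (by omega)), sub_nonneg,
      le_min_iff]
    constructor
    · calc ∑ k ∈ Finset.range K, u k ≤ ∑ k ∈ Finset.range N, u k := by
            apply Finset.sum_le_sum_of_subset_of_nonneg (Finset.range_subset_range.2 hK)
            intro k hk _; exact hu0 k (Finset.mem_range.1 hk)
        _ ≤ t := hut
    · exact Finset.sum_le_sum fun k hk =>
        hug k (by have := Finset.mem_range.1 hk; omega)
  have expand : ∑ k ∈ Finset.range N,
      r k * (min (max (t - ∑ j ∈ Finset.range k, gg j) 0) (gg k) - u k)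
      = (∑ k ∈ Finset.range N, r k * min (max (t - ∑ j ∈ Finset.range k, gg j) 0) (gg k))
        - ∑ k ∈ Finset.range N, r k * u k := by
    rw [← Finset.sum_sub_distrib]
    apply Finset.sum_congr rfl
    intro k _; ring
  linarith [key, expand.symm ▸ key]

lemma cast_min_div (m o dk D : ℕ) (hD : 0 < D) :
    ((min (m - o) dk : ℕ) : ℝ) / (D : ℝ)
      = min (max ((m : ℝ)/D - (o : ℝ)/D) 0) ((dk : ℝ)/D) := by
  have hDR : (0:ℝ) < D := by exact_mod_cast hD
  have h1 : min (m - o) dk = min m (o + dk) - min m o := by omega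
  have h2 : min m o ≤ min m (o + dk) := by omega
  rw [h1, Nat.cast_sub h2, Nat.cast_min, Nat.cast_min, Nat.cast_add]
  rw [minmax_eq _ _ _ (by positivity), sub_div, ← min_div_div_right hDR.le,
    ← min_div_div_right hDR.le, add_div]

lemma range_filter_lt (N t : ℕ) :
    (Finset.range N).filter (fun x => x < t) = Finset.range (min t N) := by
  ext x
  simp only [Finset.mem_filter, Finset.mem_range, Nat.lt_min]
  tauto

lemma fin_card_filter_lt (N t : ℕ) :
    ((Finset.univ : Finset (Fin N)).filter (fun j : Fin N => (j : ℕ) < t)).card = min t N := by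
  have key : ((Finset.univ : Finset (Fin N)).filter (fun j : Fin N => (j : ℕ) < t)).card
      = (Finset.range (min t N)).card := by
    apply Finset.card_bij (fun (a : Fin N) _ => (a : ℕ))
    · intro a ha
      simp only [Finset.mem_filter, Finset.mem_univ, true_and] at ha
      simp only [Finset.mem_range, Nat.lt_min]
      exact ⟨ha, a.2⟩
    · intro a _ b _ h; exact Fin.val_injective h
    · intro b hb
      simp only [Finset.mem_range, Nat.lt_min] at hb
      exact ⟨⟨b, hb.2⟩, by simp [hb.1], rfl⟩
  rw [key, Finset.card_range]

lemma fiber_card {n : ℕ} (d : Fin n → ℕ) (S : Finset (Σ i : Fin n, Fin (d i))) (i : Fin n) :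
    (S.filter (fun x => x.1 = i)).card
      = ((Finset.univ : Finset (Fin (d i))).filter (fun j => (⟨i, j⟩ : Σ i, Fin (d i)) ∈ S)).card := by
  symm
  apply Finset.card_bij (fun (j : Fin (d i)) _ => (⟨i, j⟩ : Σ i, Fin (d i)))
  · intro j hj
    simp only [Finset.mem_filter, Finset.mem_univ, true_and] at hj
    simp [hj]
  · intro a _ b _ h; simpa using h
  · rintro ⟨i', j'⟩ hx
    simp only [Finset.mem_filter] at hx
    obtain ⟨hS, hi⟩ := hx
    subst hi
    exact ⟨j', by simp [hS], rfl⟩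

/-- Extend a `Fin n`-indexed vector by zeros. -/
def ext0 {n : ℕ} {M : Type*} [Zero M] (f : Fin n → M) : ℕ → M :=
  fun k => if h : k < n then f ⟨k, h⟩ else 0

lemma ext0_lt {n : ℕ} {M : Type*} [Zero M] (f : Fin n → M) (k : ℕ) (h : k < n) :
    ext0 f k = f ⟨k, h⟩ := dif_pos h

lemma ext0_fin {n : ℕ} {M : Type*} [Zero M] (f : Fin n → M) (k : Fin n) :
    ext0 f (k : ℕ) = f k := by
  rw [ext0_lt f _ k.2]

lemma sum_filter_lt_eq {n : ℕ} {M : Type*} [AddCommMonoid M] (f : Fin n → M) (k : Fin n) :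
    ∑ j ∈ Finset.univ.filter (fun j => j < k), f j
      = ∑ j ∈ Finset.range (k : ℕ), ext0 f j := by
  rw [Finset.sum_filter]
  calc ∑ j : Fin n, (if j < k then f j else 0)
      = ∑ j : Fin n, (fun m => if m < (k : ℕ) then ext0 f m else 0) (j : ℕ) :=
        Finset.sum_congr rfl fun j _ => by simp only [Fin.lt_def, ext0_fin]
    _ = ∑ m ∈ Finset.range n, (if m < (k : ℕ) then ext0 f m else 0) := by
        exact Fin.sum_univ_eq_sum_range (fun m => if m < (k : ℕ) then ext0 f m else 0) n
    _ = ∑ m ∈ (Finset.range n).filter (fun m => m < (k : ℕ)), ext0 f m :=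
        (Finset.sum_filter _ _).symm
    _ = ∑ m ∈ Finset.range (min (k : ℕ) n), ext0 f m := by rw [range_filter_lt]
    _ = ∑ m ∈ Finset.range (k : ℕ), ext0 f m := by rw [min_eq_left (le_of_lt k.2)]

lemma sum_perm_range {n : ℕ} {M : Type*} [AddCommMonoid M] (π : Equiv.Perm (Fin n))
    (F : Fin n → M) :
    ∑ i : Fin n, F i = ∑ k ∈ Finset.range n, ext0 (fun k => F (π k)) k := by
  rw [← Equiv.sum_comp π F, ← Fin.sum_univ_eq_sum_range (ext0 fun k => F (π k)) n]
  exact Finset.sum_congr rfl fun k _ => (ext0_fin (fun k => F (π k)) k).symm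

lemma lorenz_eq {n : ℕ} (g p : Fin n → ℝ) (π : Equiv.Perm (Fin n)) (t : ℝ) :
    lorenz g p π t = ∑ k ∈ Finset.range n,
      ext0 (fun i => p (π i) / g (π i)) k *
        min (max (t - ∑ j ∈ Finset.range k, ext0 (fun i => g (π i)) j) 0)
          (ext0 (fun i => g (π i)) k) := by
  unfold lorenz
  rw [← Fin.sum_univ_eq_sum_range (fun k => ext0 (fun i => p (π i) / g (π i)) k *
        min (max (t - ∑ j ∈ Finset.range k, ext0 (fun i => g (π i)) j) 0)
          (ext0 (fun i => g (π i)) k)) n]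
  apply Finset.sum_congr rfl
  intro k _
  rw [ext0_fin, ext0_fin, ← sum_filter_lt_eq (fun i => g (π i)) k]

lemma sigma_sum_fiber {n : ℕ} (d : Fin n → ℕ) (f : Fin n → ℝ)
    (S : Finset (Σ i : Fin n, Fin (d i))) :
    ∑ x ∈ S, f x.1
      = ∑ i : Fin n, ((S.filter (fun x => x.1 = i)).card : ℝ) * f i := by
  have h1 : ∑ i ∈ Finset.univ, ∑ x ∈ S.filter (fun x => x.fst = i), f x.fst
      = ∑ x ∈ S, f x.fst :=
    Finset.sum_fiberwise_of_maps_to (fun x _ => Finset.mem_univ x.1) _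
  rw [← h1]
  apply Finset.sum_congr rfl
  intro i _
  rw [Finset.sum_congr rfl (fun x hx => by rw [(Finset.mem_filter.1 hx).2] :
    ∀ x ∈ S.filter (fun x => x.1 = i), f x.1 = f i), Finset.sum_const, nsmul_eq_mul]

lemma nat_greedy (m : ℕ) (dn : ℕ → ℕ) (K : ℕ) :
    ∑ k ∈ Finset.range K, min (m - ∑ j ∈ Finset.range k, dn j) (dn k)
      = min m (∑ j ∈ Finset.range K, dn j) := by
  induction K with
  | zero => simp
  | succ K ih =>
    rw [Finset.sum_range_succ, Finset.sum_range_succ (f := dn), ih]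
    omega

lemma lorenz_ge_subset {n : ℕ} (d : Fin n → ℕ) (hd : ∀ i, 0 < d i)
    (D : ℕ) (hD : D = ∑ i, d i) (hD0 : 0 < D)
    (g : Fin n → ℝ) (hg : ∀ i, g i = (d i : ℝ) / (D : ℝ))
    (p : Fin n → ℝ) (hp0 : ∀ i, 0 ≤ p i)
    (π : Equiv.Perm (Fin n)) (hβ : BetaOrdered g p π)
    (S : Finset (Σ i : Fin n, Fin (d i))) :
    ∑ x ∈ S, p x.1 / (d x.1 : ℝ) ≤ lorenz g p π ((S.card : ℝ) / (D : ℝ)) := by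
  have hDR : (0:ℝ) < D := by exact_mod_cast hD0
  have hdR : ∀ i, (0:ℝ) < d i := fun i => by exact_mod_cast hd i
  have hgpos : ∀ i, 0 < g i := fun i => by rw [hg i]; exact div_pos (hdR i) hDR
  set c : Fin n → ℕ := fun i => (S.filter (fun x => x.1 = i)).card with hc
  have hterm : ∀ i : Fin n, ((c i : ℝ)) * (p i / (d i : ℝ))
      = (p i / g i) * ((c i : ℝ) / (D : ℝ)) := by
    intro i
    have hdne : (d i : ℝ) ≠ 0 := ne_of_gt (hdR i)
    have hDne : (D : ℝ) ≠ 0 := ne_of_gt hDR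
    rw [hg i]
    field_simp
  have expand : ∑ x ∈ S, p x.1 / (d x.1 : ℝ)
      = ∑ k ∈ Finset.range n, ext0 (fun i => p (π i) / g (π i)) k *
          ext0 (fun k => ((c (π k) : ℝ)) / (D : ℝ)) k := by
    rw [sigma_sum_fiber d (fun i => p i / (d i : ℝ)) S]
    rw [sum_perm_range π (fun i => ((c i : ℝ)) * (p i / (d i : ℝ)))]
    apply Finset.sum_congr rfl
    intro k hk
    have hkn : k < n := Finset.mem_range.1 hk
    rw [ext0_lt _ k hkn, ext0_lt _ k hkn, ext0_lt _ k hkn, hterm]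
  rw [expand, lorenz_eq]
  apply greedy_max n _ (by positivity)
  · intro k l hkl hl
    have hkn : k < n := lt_of_le_of_lt hkl hl
    rw [ext0_lt _ k hkn, ext0_lt _ l hl]
    exact hβ ⟨k, hkn⟩ ⟨l, hl⟩ hkl
  · intro k hk
    rw [ext0_lt _ k hk]
    exact div_nonneg (hp0 _) (hgpos _).le
  · intro k hk
    rw [ext0_lt _ k hk]
    exact (hgpos _).le
  · intro k hk
    rw [ext0_lt _ k hk]
    positivity
  · intro k hk
    rw [ext0_lt _ k hk, ext0_lt _ k hk, hg]
    have hcd : c (π ⟨k, hk⟩) ≤ d (π ⟨k, hk⟩) := by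
      rw [hc]
      calc (S.filter (fun x => x.1 = π ⟨k, hk⟩)).card
          = ((Finset.univ : Finset (Fin (d (π ⟨k, hk⟩)))).filter
              (fun j => (⟨π ⟨k, hk⟩, j⟩ : Σ i, Fin (d i)) ∈ S)).card :=
            fiber_card d S (π ⟨k, hk⟩)
        _ ≤ (Finset.univ : Finset (Fin (d (π ⟨k, hk⟩)))).card := Finset.card_filter_le _ _
        _ = d (π ⟨k, hk⟩) := by simp
    have : ((c (π ⟨k, hk⟩) : ℝ)) ≤ (d (π ⟨k, hk⟩) : ℝ) := by exact_mod_cast hcd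
    gcongr
  · have : ∑ k ∈ Finset.range n, ext0 (fun k => ((c (π k) : ℝ)) / (D : ℝ)) k
        = (S.card : ℝ) / (D : ℝ) := by
      rw [← sum_perm_range π (fun i => ((c i : ℝ)) / (D : ℝ)), ← Finset.sum_div]
      congr 1
      rw [← Nat.cast_sum]
      congr 1
      exact (Finset.card_eq_sum_card_fiberwise (fun x _ => Finset.mem_univ x.1)).symm
    exact le_of_eq this

lemma lorenz_exists_subset {n : ℕ} (d : Fin n → ℕ) (hd : ∀ i, 0 < d i)
    (D : ℕ) (hD : D = ∑ i, d i) (hD0 : 0 < D)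
    (g : Fin n → ℝ) (hg : ∀ i, g i = (d i : ℝ) / (D : ℝ))
    (p : Fin n → ℝ)
    (π : Equiv.Perm (Fin n)) (m : ℕ) (hm : m ≤ D) :
    ∃ S : Finset (Σ i : Fin n, Fin (d i)), S.card = m ∧
      ∑ x ∈ S, p x.1 / (d x.1 : ℝ) = lorenz g p π ((m : ℝ) / (D : ℝ)) := by
  have hDR : (0:ℝ) < D := by exact_mod_cast hD0
  have hdR : ∀ i, (0:ℝ) < d i := fun i => by exact_mod_cast hd i
  set off : ℕ → ℕ := fun k => ∑ j ∈ Finset.range k, ext0 (fun i => d (π i)) j with hoff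
  set S : Finset (Σ i : Fin n, Fin (d i)) :=
    Finset.univ.filter (fun x => off ((π.symm x.1) : ℕ) + (x.2 : ℕ) < m) with hS
  -- fiber cards
  have hfib : ∀ i : Fin n, (S.filter (fun x => x.1 = i)).card
      = min (m - off ((π.symm i) : ℕ)) (d i) := by
    intro i
    rw [fiber_card d S i]
    have hmem : ∀ j : Fin (d i), ((⟨i, j⟩ : Σ i, Fin (d i)) ∈ S)
        ↔ ((j : ℕ) < m - off ((π.symm i) : ℕ)) := by
      intro j
      rw [hS]
      simp only [Finset.mem_filter, Finset.mem_univ, true_and]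
      omega
    rw [Finset.filter_congr (fun j _ => by rw [hmem j]), fin_card_filter_lt]
  -- total sum of ext0 d∘π over range n is D
  have hoffn : off n = D := by
    have h0 : off n = ∑ j ∈ Finset.range n, ext0 (fun i => d (π i)) j := rfl
    rw [h0, ← sum_perm_range π d]
    exact hD.symm
  -- cardinality of S
  have hcard : S.card = m := by
    rw [Finset.card_eq_sum_card_fiberwise (fun x _ => Finset.mem_univ x.1)]
    have : ∑ i : Fin n, (S.filter (fun x => x.1 = i)).card
        = ∑ k ∈ Finset.range n, min (m - off k) (ext0 (fun i => d (π i)) k) := by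
      rw [sum_perm_range π (fun i => (S.filter (fun x => x.1 = i)).card)]
      apply Finset.sum_congr rfl
      intro k hk
      have hkn : k < n := Finset.mem_range.1 hk
      rw [ext0_lt _ k hkn, ext0_lt _ k hkn, hfib]
      congr 2
      rw [Equiv.symm_apply_apply]
    rw [this, nat_greedy m _ n]
    rw [show ∑ j ∈ Finset.range n, ext0 (fun i => d (π i)) j = off n from rfl, hoffn]
    omega
  refine ⟨S, hcard, ?_⟩
  -- value of the sum
  rw [sigma_sum_fiber d (fun i => p i / (d i : ℝ)) S, lorenz_eq,
    sum_perm_range π (fun i => ((S.filter (fun x => x.1 = i)).card : ℝ) * (p i / (d i : ℝ)))]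
  apply Finset.sum_congr rfl
  intro k hk
  have hkn : k < n := Finset.mem_range.1 hk
  rw [ext0_lt _ k hkn, ext0_lt _ k hkn, ext0_lt _ k hkn]
  have hCsum : ∑ j ∈ Finset.range k, ext0 (fun i => g (π i)) j = ((off k : ℕ) : ℝ) / (D : ℝ) := by
    rw [hoff, Nat.cast_sum, Finset.sum_div]
    apply Finset.sum_congr rfl
    intro j hj
    have hjn : j < n := lt_of_lt_of_le (Finset.mem_range.1 hj) (le_of_lt hkn)
    rw [ext0_lt _ j hjn, ext0_lt _ j hjn, hg]
  rw [hCsum, hfib, Equiv.symm_apply_apply, hg (π ⟨k, hkn⟩),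
    ← cast_min_div m (off k) (d (π ⟨k, hkn⟩)) D hD0]
  have hdne : (d (π ⟨k, hkn⟩) : ℝ) ≠ 0 := ne_of_gt (hdR _)
  have hDne : (D : ℝ) ≠ 0 := ne_of_gt hDR
  field_simp

lemma affine_piece (D : ℕ) (hD0 : 0 < D) (m o dk : ℕ) (s t : ℝ)
    (hs0 : 0 ≤ s) (hs1 : s ≤ 1)
    (ht : t = (1 - s) * ((m : ℝ) / D) + s * (((m : ℝ) + 1) / D)) :
    min (max (t - (o : ℝ) / D) 0) ((dk : ℝ) / D)
      = (1 - s) * min (max ((m : ℝ) / D - (o : ℝ) / D) 0) ((dk : ℝ) / D)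
        + s * min (max (((m : ℝ) + 1) / D - (o : ℝ) / D) 0) ((dk : ℝ) / D) := by
  have hDR : (0:ℝ) < D := by exact_mod_cast hD0
  have hab : (m : ℝ) / D ≤ ((m : ℝ) + 1) / D := by gcongr; linarith
  have htlb : (m : ℝ) / D ≤ t := by nlinarith
  have htub : t ≤ ((m : ℝ) + 1) / D := by nlinarith
  have hdk0 : (0:ℝ) ≤ (dk : ℝ) / D := by positivity
  rcases le_or_gt (m + 1) o with h1 | h1
  · -- everything before the block: all zero
    have ho : ((m : ℝ) + 1) ≤ (o : ℝ) := by exact_mod_cast h1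
    have hoD : ((m : ℝ) + 1) / D ≤ (o : ℝ) / D := by gcongr
    rw [max_eq_right (by linarith), max_eq_right (by linarith), max_eq_right (by linarith),
      min_eq_left hdk0]
    ring
  rcases le_or_gt (o + dk) m with h2 | h2
  · -- block fully used: all dk/D
    have ho : (o : ℝ) + (dk : ℝ) ≤ (m : ℝ) := by exact_mod_cast h2
    have hoD : ((o : ℝ) + (dk : ℝ)) / D ≤ (m : ℝ) / D := by gcongr
    rw [add_div] at hoD
    rw [max_eq_left (by linarith), max_eq_left (by linarith), max_eq_left (by linarith),
      min_eq_right (by linarith), min_eq_right (by linarith), min_eq_right (by linarith)]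
    ring
  · -- partial block: linear part
    have ho1 : (o : ℝ) ≤ (m : ℝ) := by exact_mod_cast (by omega : o ≤ m)
    have ho2 : (m : ℝ) + 1 ≤ (o : ℝ) + (dk : ℝ) := by exact_mod_cast (by omega : m + 1 ≤ o + dk)
    have hoD1 : (o : ℝ) / D ≤ (m : ℝ) / D := by gcongr
    have hoD2 : ((m : ℝ) + 1) / D ≤ (o : ℝ) / D + (dk : ℝ) / D := by
      rw [← add_div]; gcongr
    rw [max_eq_left (by linarith), max_eq_left (by linarith), max_eq_left (by linarith),
      min_eq_left (by linarith), min_eq_left (by linarith), min_eq_left (by linarith)]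
    linear_combination ht

lemma lorenz_affine {n : ℕ} (d : Fin n → ℕ) (hd : ∀ i, 0 < d i)
    (D : ℕ) (hD : D = ∑ i, d i) (hD0 : 0 < D)
    (g : Fin n → ℝ) (hg : ∀ i, g i = (d i : ℝ) / (D : ℝ))
    (p : Fin n → ℝ) (π : Equiv.Perm (Fin n)) (m : ℕ) (s t : ℝ)
    (hs0 : 0 ≤ s) (hs1 : s ≤ 1)
    (ht : t = (1 - s) * ((m : ℝ) / D) + s * (((m : ℝ) + 1) / D)) :
    lorenz g p π t = (1 - s) * lorenz g p π ((m : ℝ) / D)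
      + s * lorenz g p π (((m : ℝ) + 1) / D) := by
  rw [lorenz_eq, lorenz_eq, lorenz_eq, Finset.mul_sum, Finset.mul_sum,
    ← Finset.sum_add_distrib]
  apply Finset.sum_congr rfl
  intro k hk
  have hkn : k < n := Finset.mem_range.1 hk
  have hCsum : ∀ t' : ℝ, ∑ j ∈ Finset.range k, ext0 (fun i => g (π i)) j
      = ((∑ j ∈ Finset.range k, ext0 (fun i => d (π i)) j : ℕ) : ℝ) / (D : ℝ) := by
    intro _
    rw [Nat.cast_sum, Finset.sum_div]
    apply Finset.sum_congr rfl
    intro j hj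
    have hjn : j < n := lt_of_lt_of_le (Finset.mem_range.1 hj) (le_of_lt hkn)
    rw [ext0_lt _ j hjn, ext0_lt _ j hjn, hg]
  rw [hCsum t, ext0_lt (fun i => g (π i)) k hkn, hg (π ⟨k, hkn⟩),
    affine_piece D hD0 m _ (d (π ⟨k, hkn⟩)) s t hs0 hs1 ht]
  ring

/-- The embedding map `Γ : ℝ^n → ℝ^D` for `g i = d i / D`: the `i`-th block consists of
`d i` copies of `p i / d i`; here `ℝ^D` is indexed by `Σ i, Fin (d i)` (of cardinality
`D = ∑ i, d i`). Thermo-majorization relative to `g` is equivalent to majorization of the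
embedded vectors. -/
theorem stmt5 {n : ℕ} (d : Fin n → ℕ) (hd : ∀ i, 0 < d i)
    (D : ℕ) (hD : D = ∑ i, d i)
    (g : Fin n → ℝ) (hg : ∀ i, g i = (d i : ℝ) / (D : ℝ))
    (p q : Fin n → ℝ) (hp : IsProbVec p) (hq : IsProbVec q) :
    ThermoMaj g p q ↔
    Majorizes (fun x : Σ i : Fin n, Fin (d i) => p x.1 / (d x.1 : ℝ))
      (fun x : Σ i : Fin n, Fin (d i) => q x.1 / (d x.1 : ℝ)) := by
  -- degenerate case n = 0 is impossible
  rcases Nat.eq_zero_or_pos n with hn0 | hn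
  · exfalso
    have h2 := hp.2
    subst hn0
    simp at h2
  have hD0 : 0 < D := by
    rw [hD]
    exact Finset.sum_pos (fun i _ => hd i) ⟨⟨0, hn⟩, Finset.mem_univ _⟩
  have hDR : (0:ℝ) < D := by exact_mod_cast hD0
  have hdR : ∀ i, (0:ℝ) < d i := fun i => by exact_mod_cast hd i
  have hcardD : Fintype.card (Σ i : Fin n, Fin (d i)) = D := by
    simp [Fintype.card_sigma, hD]
  have hsum : ∀ r : Fin n → ℝ,
      ∑ x : Σ i : Fin n, Fin (d i), r x.1 / (d x.1 : ℝ) = ∑ i, r i := by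
    intro r
    rw [← Finset.univ_sigma_univ, Finset.sum_sigma]
    apply Finset.sum_congr rfl
    intro i _
    show ∑ _s : Fin (d i), r i / (d i : ℝ) = r i
    rw [Finset.sum_const, Finset.card_univ, Fintype.card_fin, nsmul_eq_mul,
      ← mul_div_assoc, mul_div_cancel_left₀ _ (ne_of_gt (hdR i))]
  constructor
  · rintro ⟨π, π', hβp, hβq, hL⟩
    constructor
    · rw [hsum p, hsum q, hp.2, hq.2]
    · intro S
      have hm : S.card ≤ D := by
        calc S.card ≤ Fintype.card (Σ i : Fin n, Fin (d i)) := Finset.card_le_univ S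
          _ = D := hcardD
      obtain ⟨S', hS'card, hS'val⟩ := lorenz_exists_subset d hd D hD hD0 g hg p π S.card hm
      refine ⟨S', hS'card, ?_⟩
      calc ∑ x ∈ S, q x.1 / (d x.1 : ℝ)
          ≤ lorenz g q π' ((S.card : ℝ) / D) :=
            lorenz_ge_subset d hd D hD hD0 g hg q hq.1 π' hβq S
        _ ≤ lorenz g p π ((S.card : ℝ) / D) := by
            apply hL
            constructor
            · positivity
            · rw [div_le_one hDR]
              exact_mod_cast hm
        _ = ∑ x ∈ S', p x.1 / (d x.1 : ℝ) := hS'val.symm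
  · rintro ⟨-, hmaj⟩
    set π : Equiv.Perm (Fin n) := Tuple.sort (fun i => -(p i / g i)) with hπ
    set π' : Equiv.Perm (Fin n) := Tuple.sort (fun i => -(q i / g i)) with hπ'
    have hβp : BetaOrdered g p π := by
      intro k l hkl
      have := Tuple.monotone_sort (fun i => -(p i / g i)) hkl
      simp only [Function.comp_apply] at this
      linarith
    have hβq : BetaOrdered g q π' := by
      intro k l hkl
      have := Tuple.monotone_sort (fun i => -(q i / g i)) hkl
      simp only [Function.comp_apply] at this
      linarith
    have hgrid : ∀ m : ℕ, m ≤ D →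
        lorenz g q π' ((m : ℝ) / D) ≤ lorenz g p π ((m : ℝ) / D) := by
      intro m hm
      obtain ⟨S, hScard, hSval⟩ := lorenz_exists_subset d hd D hD hD0 g hg q π' m hm
      obtain ⟨S', hS'card, hS'le⟩ := hmaj S
      rw [← hSval]
      calc ∑ x ∈ S, q x.1 / (d x.1 : ℝ) ≤ ∑ x ∈ S', p x.1 / (d x.1 : ℝ) := hS'le
        _ ≤ lorenz g p π ((S'.card : ℝ) / D) :=
            lorenz_ge_subset d hd D hD hD0 g hg p hp.1 π hβp S'
        _ = lorenz g p π ((m : ℝ) / D) := by rw [hS'card, hScard]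
    refine ⟨π, π', hβp, hβq, ?_⟩
    rintro t ⟨ht0, ht1⟩
    set m : ℕ := min (⌊t * D⌋₊) (D - 1) with hm
    have hm1 : m + 1 ≤ D := by omega
    have hfl : (m : ℝ) ≤ t * D := by
      calc (m : ℝ) ≤ (⌊t * D⌋₊ : ℝ) := by exact_mod_cast min_le_left _ _
        _ ≤ t * D := Nat.floor_le (by positivity)
    have hfu : t * D ≤ (m : ℝ) + 1 := by
      by_cases hc : ⌊t * D⌋₊ ≤ D - 1
      · have hmeq : m = ⌊t * D⌋₊ := min_eq_left hc
        rw [hmeq]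
        exact le_of_lt (Nat.lt_floor_add_one _)
      · have hmeq : m = D - 1 := min_eq_right (by omega)
        have : ((m : ℝ)) + 1 = (D : ℝ) := by
          rw [hmeq]
          have : ((D - 1 : ℕ) : ℝ) = (D : ℝ) - 1 := by
            rw [Nat.cast_sub hD0]; norm_num
          rw [this]; ring
        rw [this]
        nlinarith
    set s : ℝ := t * D - m with hs
    have hs0 : 0 ≤ s := by rw [hs]; linarith
    have hs1 : s ≤ 1 := by rw [hs]; linarith
    have hts : t = (1 - s) * ((m : ℝ) / D) + s * (((m : ℝ) + 1) / D) := by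
      rw [hs]
      field_simp
      ring
    rw [lorenz_affine d hd D hD hD0 g hg q π' m s t hs0 hs1 hts,
      lorenz_affine d hd D hD hD0 g hg p π m s t hs0 hs1 hts]
    have h1 := hgrid m (by omega)
    have h2 := hgrid (m + 1) hm1
    push_cast at h2
    exact add_le_add (mul_le_mul_of_nonneg_left h1 (by linarith))
      (mul_le_mul_of_nonneg_left h2 hs0)
end

section
/- Let g be a probability vector on Fin n with strictly positive entries. Every elementary detailed-balanced process E relative to g can be written as E = (1−λ) I + λ Ẽ for some λ ∈ [0,1] and some thermo-transposition Ẽ relative to g. -/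
open Matrix

/-- An elementary detailed-balanced process (EDP) relative to the Gibbs distribution `g`:
a column-stochastic matrix acting nontrivially only on two levels `i ≠ j` with `g i ≠ g j`,
satisfying the detailed balance condition `E i j * g j = E j i * g i`. -/
def IsEDP {n : ℕ} (g : Fin n → ℝ) (E : Matrix (Fin n) (Fin n) ℝ) : Prop :=
  ColStochastic E ∧
  ∃ i j : Fin n, i ≠ j ∧ g i ≠ g j ∧
    (∀ k m : Fin n, ¬(k ∈ ({i, j} : Set (Fin n)) ∧ m ∈ ({i, j} : Set (Fin n))) →
      E k m = if k = m then 1 else 0) ∧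
    E i j * g j = E j i * g i

/-- A thermo-transposition relative to `g`: either the identity or the column-stochastic
matrix moving all the population from the level `j` to the level `i` with `g j < g i`,
with the reverse transition probability `g j / g i` fixed by detailed balance. -/
def IsThermoTransposition {n : ℕ} (g : Fin n → ℝ) (E : Matrix (Fin n) (Fin n) ℝ) : Prop :=
  E = 1 ∨
  (ColStochastic E ∧ ∃ i j : Fin n, g j < g i ∧
    E i j = 1 ∧ E j j = 0 ∧ E j i = g j / g i ∧ E i i = 1 - g j / g i ∧
    ∀ k m : Fin n, ¬(k ∈ ({i, j} : Set (Fin n)) ∧ m ∈ ({i, j} : Set (Fin n))) →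
      E k m = if k = m then 1 else 0)

lemma sum_two_aux {n : ℕ} (a b : Fin n) (hab : a ≠ b) (x y : ℝ) :
    ∑ k, (if k = a then x else if k = b then y else 0) = x + y := by
  have h : ∀ k : Fin n, (if k = a then x else if k = b then y else 0)
      = (if k = a then x else 0) + (if k = b then y else 0) := by
    intro k
    split_ifs with h1 h2 <;> simp_all
  simp_rw [h]
  rw [Finset.sum_add_distrib]
  simp [Finset.sum_ite_eq']

lemma aux_edp {n : ℕ} (g : Fin n → ℝ) (hgpos : ∀ i, 0 < g i)
    (E : Matrix (Fin n) (Fin n) ℝ) (hnn : ∀ k m, 0 ≤ E k m) (hcol : ∀ m, ∑ k, E k m = 1)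
    (i j : Fin n) (hij : i ≠ j) (hgt : g j < g i)
    (hoff : ∀ k m : Fin n, ¬(k ∈ ({i, j} : Set (Fin n)) ∧ m ∈ ({i, j} : Set (Fin n))) →
      E k m = if k = m then 1 else 0)
    (hdb : E i j * g j = E j i * g i) :
    ∃ lam ∈ Set.Icc (0 : ℝ) 1, ∃ Et : Matrix (Fin n) (Fin n) ℝ,
      IsThermoTransposition g Et ∧ E = (1 - lam) • (1 : Matrix (Fin n) (Fin n) ℝ) + lam • Et := by
  have hgi : (0:ℝ) < g i := hgpos i
  have hgj : (0:ℝ) < g j := hgpos j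
  have hji' : j ≠ i := hij.symm
  set lam := E i j with hlam
  have hsum : ∀ m : Fin n, m ∈ ({i, j} : Set (Fin n)) → E i m + E j m = 1 := by
    intro m hm
    have h0 : ∀ k ∈ Finset.univ, k ∉ ({i, j} : Finset (Fin n)) → E k m = 0 := by
      intro k _ hk
      simp only [Finset.mem_insert, Finset.mem_singleton, not_or] at hk
      rw [hoff k m (by simp [hk.1]; tauto)]
      have : k ≠ m := by
        rcases hm with hm | hm <;> simp_all
      simp [this]
    have h2 := Finset.sum_subset (Finset.subset_univ ({i, j} : Finset (Fin n))) h0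
    rw [Finset.sum_pair hij, hcol m] at h2
    exact h2
  have hjj : E j j = 1 - lam := by have := hsum j (by simp); linarith
  have hii : E i i = 1 - E j i := by have := hsum i (by simp); linarith
  have hji : E j i = lam * (g j / g i) := by
    field_simp
    linarith [hdb]
  refine ⟨lam, ⟨hnn i j, by nlinarith [hnn j j]⟩, ?_⟩
  set Et : Matrix (Fin n) (Fin n) ℝ := Matrix.of fun k m =>
    if m = j then (if k = i then 1 else 0)
    else if m = i then (if k = j then g j / g i else if k = i then 1 - g j / g i else 0)
    else (if k = m then 1 else 0) with hEt
  have hratio0 : (0:ℝ) ≤ g j / g i := by positivity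
  have hratio1 : g j / g i ≤ 1 := by
    rw [div_le_one hgi]; linarith
  have hEtCS : ColStochastic Et := by
    constructor
    · intro k m
      simp only [hEt, Matrix.of_apply]
      split_ifs <;> first | linarith | norm_num
    · intro m
      by_cases hmj : m = j
      · have hc : ∀ k ∈ Finset.univ, Et k m = if k = i then (1:ℝ) else 0 := by
          intro k _; simp [hEt, hmj]
        rw [Finset.sum_congr rfl hc]
        simp [Finset.sum_ite_eq']
      · by_cases hmi : m = i
        · have hc : ∀ k ∈ Finset.univ, Et k m =
              if k = j then g j / g i else if k = i then 1 - g j / g i else 0 := by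
            intro k _; simp [hEt, hmi, hij, hji']
          rw [Finset.sum_congr rfl hc, sum_two_aux j i hji']
          ring
        · have hc : ∀ k ∈ Finset.univ, Et k m = if k = m then (1:ℝ) else 0 := by
            intro k _; simp [hEt, hmj, hmi]
          rw [Finset.sum_congr rfl hc]
          simp [Finset.sum_ite_eq']
  refine ⟨Et, Or.inr ⟨hEtCS, i, j, hgt, ?_, ?_, ?_, ?_, ?_⟩, ?_⟩
  · simp [hEt]
  · simp [hEt, hij, hji']
  · simp [hEt, hij, hji']
  · simp [hEt, hij, hji']
  · intro k m hkm
    simp only [Set.mem_insert_iff, Set.mem_singleton_iff, not_and_or, not_or] at hkm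
    by_cases hmj : m = j
    · have hk : k ≠ i ∧ k ≠ j := by
        rcases hkm with h | h
        · exact h
        · exact absurd hmj h.2
      simp [hEt, hmj, hk.1, hk.2]
    · by_cases hmi : m = i
      · have hk : k ≠ i ∧ k ≠ j := by
          rcases hkm with h | h
          · exact h
          · exact absurd hmi h.1
        simp [hEt, hmi, hk.1, hk.2, hji']
      · simp [hEt, hmj, hmi]
  · ext k m
    simp only [Matrix.add_apply, Matrix.smul_apply, Matrix.one_apply, smul_eq_mul]
    by_cases hmj : m = j
    · by_cases hki : k = i
      · rw [hmj, hki]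
        simp only [hEt, Matrix.of_apply, if_neg hij, ite_true, if_pos rfl]
        rw [← hlam]
        ring
      · by_cases hkj : k = j
        · simp [hEt, hmj, hkj, hji', hjj]
        · rw [hoff k m (by simp [hki, hkj])]
          simp [hEt, hmj, hki, hkj]
    · by_cases hmi : m = i
      · by_cases hkj : k = j
        · simp [hEt, hmi, hkj, hij, hji', hji]
        · by_cases hki : k = i
          · simp [hEt, hmi, hki, hij, hji', hii, hji]
            ring
          · rw [hoff k m (by simp [hki, hkj])]
            simp [hEt, hmi, hki, hkj, hij, hji']
      · rw [hoff k m (by simp [hmi, hmj])]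
        by_cases hkm : k = m <;> simp [hEt, hkm, hmi, hmj]

/-- Every elementary detailed-balanced process relative to `g` is a convex combination
`(1 - λ) • I + λ • Ẽ` of the identity and a thermo-transposition `Ẽ` relative to `g`. -/
theorem stmt6 {n : ℕ} (g : Fin n → ℝ) (hgpos : ∀ i, 0 < g i)
    (E : Matrix (Fin n) (Fin n) ℝ) (hE : IsEDP g E) :
    ∃ lam ∈ Set.Icc (0 : ℝ) 1, ∃ Et : Matrix (Fin n) (Fin n) ℝ,
      IsThermoTransposition g Et ∧ E = (1 - lam) • (1 : Matrix (Fin n) (Fin n) ℝ) + lam • Et := by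
  obtain ⟨⟨hnn, hcol⟩, i, j, hij, hgij, hoff, hdb⟩ := hE
  rcases lt_or_gt_of_ne hgij with h | h
  · have hoff' : ∀ k m : Fin n, ¬(k ∈ ({j, i} : Set (Fin n)) ∧ m ∈ ({j, i} : Set (Fin n))) →
        E k m = if k = m then 1 else 0 := by
      intro k m hkm
      apply hoff
      simp only [Set.mem_insert_iff, Set.mem_singleton_iff, not_and_or, not_or] at hkm ⊢
      tauto
    exact aux_edp g hgpos E hnn hcol j i hij.symm h hoff' hdb.symm
  · exact aux_edp g hgpos E hnn hcol i j hij h hoff hdb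
end

section
/- For β̄ > 0 define J(s) = (1 − e^{−β̄}) ∑_{n=1}^∞ sin²(s√n) e^{−β̄(n−1)} for s ∈ ℝ. Then for every s ∈ ℝ: if 0 < β̄ ≤ (log 4)/3 then J(s) ≤ (8 e^{−β̄} − e^{2β̄} + e^{3β̄} + 8)/16, and if β̄ ≥ (log 4)/3 then J(s) ≤ e^{−4β̄} − e^{−3β̄} + 1. -/
/-- The de-excitation probability of the resonant Jaynes–Cummings interaction after a
rescaled time `s`, at inverse temperature `β̄ = βħω`:
`J(s) = (1 - e^{-β̄}) ∑_{n ≥ 1} sin²(s√n) e^{-β̄(n-1)}`. -/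
noncomputable def JCdeexc (β s : ℝ) : ℝ :=
  (1 - Real.exp (-β)) *
    ∑' n : ℕ, Real.sin (s * Real.sqrt (n + 1)) ^ 2 * Real.exp (-β * n)

/-- Time-independent upper bounds on the Jaynes–Cummings de-excitation probability:
for `0 < β̄ ≤ (log 4)/3`, `J(s) ≤ (8 e^{-β̄} - e^{2β̄} + e^{3β̄} + 8)/16`, and for
`β̄ ≥ (log 4)/3`, `J(s) ≤ e^{-4β̄} - e^{-3β̄} + 1`. -/
theorem stmt10 (β : ℝ) (hβ : 0 < β) (s : ℝ) :
    (β ≤ Real.log 4 / 3 →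
      JCdeexc β s ≤
        (8 * Real.exp (-β) - Real.exp (2 * β) + Real.exp (3 * β) + 8) / 16) ∧
    (Real.log 4 / 3 ≤ β →
      JCdeexc β s ≤ Real.exp (-(4 * β)) - Real.exp (-(3 * β)) + 1) := by
  set r := Real.exp (-β) with hrdef
  have hr0 : 0 < r := Real.exp_pos _
  have hr1 : r < 1 := Real.exp_lt_one_iff.mpr (by linarith)
  have h1r : 0 < 1 - r := by linarith
  set u := Real.sin s ^ 2 with hudef
  have hu0 : 0 ≤ u := sq_nonneg _
  have hu1 : u ≤ 1 := Real.sin_sq_le_one s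
  set b : ℕ → ℝ := fun n =>
    if n = 0 then u else if n = 3 then 4*u*(1-u)*r^3 else r^n with hbdef
  have h4u : 4*u*(1-u) ≤ 1 := by nlinarith [sq_nonneg (2*u-1)]
  have h4u0 : 0 ≤ 4*u*(1-u) := by nlinarith
  have hble : ∀ n, b n ≤ r ^ n := by
    intro n
    simp only [hbdef]
    split_ifs with h1 h2
    · subst h1; simpa using hu1
    · subst h2; nlinarith [pow_pos hr0 3]
    · exact le_refl _
  have hb0 : ∀ n, 0 ≤ b n := by
    intro n
    simp only [hbdef]
    split_ifs with h1 h2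
    · exact hu0
    · positivity
    · positivity
  have hsumgeo : Summable (fun n : ℕ => r ^ n) := summable_geometric_of_lt_one hr0.le hr1
  have hsumb : Summable b := hsumgeo.of_nonneg_of_le hb0 hble
  have ha : ∀ n : ℕ, Real.sin (s * Real.sqrt (n+1)) ^ 2 * r ^ n ≤ b n := by
    intro n
    have hrn : (0:ℝ) ≤ r ^ n := by positivity
    simp only [hbdef]
    split_ifs with h1 h2
    · subst h1
      norm_num [Real.sqrt_one]
      exact hudef.ge
    · subst h2
      have h4 : Real.sqrt ((3:ℕ)+1) = 2 := by
        rw [show ((3:ℕ):ℝ)+1 = 2^2 by norm_num, Real.sqrt_sq (by norm_num : (0:ℝ) ≤ 2)]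
      rw [h4]
      have hs2 : Real.sin (s*2)^2 = 4*u*(1-u) := by
        rw [mul_comm s 2, Real.sin_two_mul, hudef, ← Real.cos_sq' s]; ring
      rw [hs2]
    · nlinarith [Real.sin_sq_le_one (s * Real.sqrt (n+1)), sq_nonneg (Real.sin (s * Real.sqrt (n+1)))]
  have hsuma : Summable (fun n : ℕ => Real.sin (s * Real.sqrt (n+1)) ^ 2 * r ^ n) := by
    apply hsumgeo.of_nonneg_of_le (fun n => by positivity)
    intro n
    nlinarith [Real.sin_sq_le_one (s * Real.sqrt (n+1)), sq_nonneg (Real.sin (s * Real.sqrt (n+1))), pow_nonneg hr0.le n]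
  -- compute tsum b
  have hc1 : Summable (fun n : ℕ => if n = 0 then u - 1 else 0) := (hasSum_ite_eq 0 (u-1)).summable
  have hc2 : Summable (fun n : ℕ => if n = 3 then (4*u*(1-u)-1)*r^3 else 0) :=
    (hasSum_ite_eq 3 ((4*u*(1-u)-1)*r^3)).summable
  have hbc : b = fun n => r^n + ((if n = 0 then u - 1 else 0) + (if n = 3 then (4*u*(1-u)-1)*r^3 else 0)) := by
    funext n
    simp only [hbdef]
    split_ifs with h1 h2 h3 <;> simp_all <;> ring
  have htsumb : ∑' n, b n = (1-r)⁻¹ + ((u - 1) + (4*u*(1-u)-1)*r^3) := by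
    rw [hbc, Summable.tsum_add hsumgeo (hc1.add hc2), Summable.tsum_add hc1 hc2,
      tsum_ite_eq, tsum_ite_eq, tsum_geometric_of_lt_one hr0.le hr1]
  have hexp : ∀ n : ℕ, Real.exp (-β * ↑n) = r ^ n := fun n => by
    rw [mul_comm, Real.exp_nat_mul]
  have hJ : JCdeexc β s ≤ 1 + (1-r) * ((u - 1) + (4*u*(1-u)-1)*r^3) := by
    rw [JCdeexc]
    simp only [hexp]
    calc (1-r) * ∑' n : ℕ, Real.sin (s * Real.sqrt (n+1)) ^ 2 * r ^ n
        ≤ (1-r) * ∑' n, b n :=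
          mul_le_mul_of_nonneg_left (Summable.tsum_le_tsum ha hsuma hsumb) h1r.le
      _ = 1 + (1-r) * ((u - 1) + (4*u*(1-u)-1)*r^3) := by
          rw [htsumb]; field_simp
  have hE : r * Real.exp β = 1 := by
    rw [hrdef, ← Real.exp_add]; simp
  constructor
  · intro _
    have hE2 : Real.exp (2*β) = Real.exp β ^ 2 := by
      rw [show (2:ℝ)*β = ((2:ℕ):ℝ)*β by norm_num, Real.exp_nat_mul]
    have hE3 : Real.exp (3*β) = Real.exp β ^ 3 := by
      rw [show (3:ℝ)*β = ((3:ℕ):ℝ)*β by norm_num, Real.exp_nat_mul]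
    have hq3 : r^3 * Real.exp β ^ 3 = 1 := by
      rw [← mul_pow, hE]; norm_num
    have key : 16*r^3*((Real.exp β ^ 3 / 16 - 1/2) - ((u - 1) + (4*u*(1-u)-1)*r^3))
        = (8*r^3*u - (1+4*r^3))^2 := by
      linear_combination hq3
    have hf : (u - 1) + (4*u*(1-u)-1)*r^3 ≤ Real.exp β ^ 3 / 16 - 1/2 := by
      nlinarith [key, sq_nonneg (8*r^3*u - (1+4*r^3)), pow_pos hr0 3]
    calc JCdeexc β s ≤ 1 + (1-r) * ((u - 1) + (4*u*(1-u)-1)*r^3) := hJ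
      _ ≤ 1 + (1-r) * (Real.exp β ^ 3 / 16 - 1/2) := by
          have := mul_le_mul_of_nonneg_left hf h1r.le
          linarith
      _ = (8 * r - Real.exp (2*β) + Real.exp (3*β) + 8) / 16 := by
          rw [hE2, hE3]
          linear_combination (-(Real.exp β ^ 2)/16) * hE
  · intro hb
    have hq : r^3 ≤ 1/4 := by
      have h3 : Real.log 4 ≤ 3 * β := by linarith
      have h1 : Real.exp (-(3*β)) ≤ Real.exp (-Real.log 4) := Real.exp_le_exp.mpr (by linarith)
      rw [Real.exp_neg (Real.log 4), Real.exp_log (by norm_num : (0:ℝ) < 4)] at h1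
      have h2 : r^3 = Real.exp (-(3*β)) := by rw [hrdef, ← Real.exp_nat_mul]; norm_num
      rw [h2]; linarith
    have hf : (u - 1) + (4*u*(1-u)-1)*r^3 ≤ -r^3 := by
      nlinarith [mul_nonneg (by linarith : (0:ℝ) ≤ 1 - u)
        (by nlinarith [pow_pos hr0 3] : (0:ℝ) ≤ 1 - 4*u*r^3)]
    have h4 : Real.exp (-(4*β)) = r^4 := by
      rw [hrdef, ← Real.exp_nat_mul]; norm_num
    have h3 : Real.exp (-(3*β)) = r^3 := by
      rw [hrdef, ← Real.exp_nat_mul]; norm_num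
    calc JCdeexc β s ≤ 1 + (1-r) * ((u - 1) + (4*u*(1-u)-1)*r^3) := hJ
      _ ≤ 1 + (1-r) * (-r^3) := by
          have := mul_le_mul_of_nonneg_left hf h1r.le
          linarith
      _ = Real.exp (-(4*β)) - Real.exp (-(3*β)) + 1 := by rw [h4, h3]; ring
end

section
/- For β̄ > 0 define J(s) = (1 − e^{−β̄}) ∑_{n=1}^∞ sin²(s√n) e^{−β̄(n−1)} for s ∈ ℝ. Then for every fixed β̄ > 0 there exists a constant C < 1 such that J(s) ≤ C for all s ∈ ℝ; in particular sup_s J(s) < 1, so the Jaynes–Cummings model cannot realise, nor arbitrarily approximate, the elementary detailed-balanced process with de-excitation probability 1. -/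
lemma JC_le (β : ℝ) (hβ : 0 < β) (s : ℝ) :
    JCdeexc β s ≤ 1 - (1 - Real.exp (-β)) * Real.exp (-β) ^ 3 / 4 := by
  set r := Real.exp (-β) with hrdef
  have hr0 : 0 < r := Real.exp_pos _
  have hr1 : r < 1 := by
    rw [hrdef]
    exact Real.exp_lt_one_iff.mpr (by linarith)
  set f : ℕ → ℝ := fun n => Real.sin (s * Real.sqrt (n + 1)) ^ 2 * r ^ n with hf
  have hexp : ∀ n : ℕ, Real.exp (-β * n) = r ^ n := by
    intro n
    rw [hrdef, ← Real.exp_nat_mul]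
    ring_nf
  have hJ : JCdeexc β s = (1 - r) * ∑' n, f n := by
    unfold JCdeexc
    congr 1
    exact tsum_congr fun n => by rw [hexp n]
  have hfle : ∀ n, f n ≤ r ^ n := by
    intro n
    have h1 : Real.sin (s * Real.sqrt (n + 1)) ^ 2 ≤ 1 := by
      have := Real.neg_one_le_sin (s * Real.sqrt (n + 1))
      have := Real.sin_le_one (s * Real.sqrt (n + 1))
      nlinarith
    have h2 : (0:ℝ) ≤ r ^ n := pow_nonneg hr0.le n
    calc f n ≤ 1 * r ^ n := mul_le_mul_of_nonneg_right h1 h2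
    _ = r ^ n := one_mul _
  have hfnonneg : ∀ n, 0 ≤ f n := fun n =>
    mul_nonneg (sq_nonneg _) (pow_nonneg hr0.le n)
  have hgeom : Summable (fun n : ℕ => r ^ n) :=
    summable_geometric_of_lt_one hr0.le hr1
  have hfs : Summable f := Summable.of_nonneg_of_le hfnonneg hfle hgeom
  set h : ℕ → ℝ := fun n => r ^ n - f n with hh
  have hhs : Summable h := hgeom.sub hfs
  have hhnonneg : ∀ n, 0 ≤ h n := fun n => by
    simp only [hh]; linarith [hfle n]
  have hsum : ∑ n ∈ ({0, 3} : Finset ℕ), h n ≤ ∑' n, h n := by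
    apply Summable.sum_le_tsum
    · intro n _; exact hhnonneg n
    · exact hhs
  have hfin : ∑ n ∈ ({0, 3} : Finset ℕ), h n = h 0 + h 3 := by
    simp [Finset.sum_pair (by norm_num : (0:ℕ) ≠ 3)]
  have htsumh : ∑' n, h n = (1 - r)⁻¹ - ∑' n, f n := by
    rw [hh]
    rw [Summable.tsum_sub hgeom hfs, tsum_geometric_of_lt_one hr0.le hr1]
  -- compute h 0 and h 3
  have hsqrt1 : Real.sqrt ((0:ℕ) + 1) = 1 := by norm_num
  have hsqrt4 : Real.sqrt ((3:ℕ) + 1) = 2 := by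
    rw [show ((3:ℕ):ℝ) + 1 = 2 ^ 2 by norm_num, Real.sqrt_sq (by norm_num)]
  have hh0 : h 0 = Real.cos s ^ 2 := by
    simp only [hh, hf, hsqrt1, pow_zero, mul_one]
    rw [Real.cos_sq']
  have hh3 : h 3 = r ^ 3 * Real.cos (2 * s) ^ 2 := by
    simp only [hh, hf, hsqrt4]
    rw [mul_comm s 2, Real.cos_sq']
    ring
  -- key inequality
  have hkey : r ^ 3 / 4 ≤ h 0 + h 3 := by
    rw [hh0, hh3, Real.cos_two_mul]
    have hc : 0 ≤ Real.cos s ^ 2 := sq_nonneg _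
    have hc1 : Real.cos s ^ 2 ≤ 1 := by
      nlinarith [Real.neg_one_le_cos s, Real.cos_le_one s]
    have hr3 : 0 < r ^ 3 := pow_pos hr0 3
    have hr31 : r ^ 3 ≤ 1 := pow_le_one₀ hr0.le hr1.le
    nlinarith [sq_nonneg (2 * Real.cos s ^ 2 - 3/4), sq_nonneg (2 * Real.cos s ^ 2 - 1),
      mul_nonneg hc (sub_nonneg.mpr hr31)]
  have h1r : 0 < 1 - r := by linarith
  have htf : ∑' n, f n ≤ (1 - r)⁻¹ - r ^ 3 / 4 := by
    have := hsum
    rw [hfin, htsumh] at this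
    linarith [hkey]
  rw [hJ]
  calc (1 - r) * ∑' n, f n ≤ (1 - r) * ((1 - r)⁻¹ - r ^ 3 / 4) :=
        mul_le_mul_of_nonneg_left htf h1r.le
    _ = 1 - (1 - r) * r ^ 3 / 4 := by
        field_simp

/-- At any fixed inverse temperature `β̄ > 0`, the Jaynes–Cummings de-excitation
probability is bounded away from `1` uniformly in the interaction time `s`: there is a
constant `C < 1` with `J(s) ≤ C` for all `s`, and in particular `⨆ s, J(s) < 1`. Hence
the Jaynes–Cummings model cannot realise, nor arbitrarily approximate, the elementary
detailed-balanced process with de-excitation probability `1`. -/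
theorem stmt11 (β : ℝ) (hβ : 0 < β) :
    (∃ C : ℝ, C < 1 ∧ ∀ s : ℝ, JCdeexc β s ≤ C) ∧ (⨆ s : ℝ, JCdeexc β s) < 1 := by
  set r := Real.exp (-β) with hrdef
  have hr0 : 0 < r := Real.exp_pos _
  have hr1 : r < 1 := Real.exp_lt_one_iff.mpr (by linarith)
  have hC : 1 - (1 - r) * r ^ 3 / 4 < 1 := by
    have : 0 < (1 - r) * r ^ 3 / 4 :=
      div_pos (mul_pos (by linarith) (pow_pos hr0 3)) (by norm_num)
    linarith
  refine ⟨⟨1 - (1 - r) * r ^ 3 / 4, hC, fun s => JC_le β hβ s⟩, ?_⟩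
  have hle : (⨆ s : ℝ, JCdeexc β s) ≤ 1 - (1 - r) * r ^ 3 / 4 :=
    ciSup_le fun s => JC_le β hβ s
  linarith
end

section
/- Let g be a probability vector on Fin n with strictly positive entries. Every Partial Level Thermalisation P relative to g (on levels i ≠ j with g_i ≠ g_j) is an elementary detailed-balanced process relative to g; moreover, if g_i > g_j then the de-excitation probability satisfies P_{i j} ≤ g_i/(g_i + g_j) < 1 for every choice of ε ∈ [0,1]. Consequently, the elementary detailed-balanced process with E_{i j} = 1 is not a Partial Level Thermalisation, so Partial Level Thermalisations form a strict subset of elementary detailed-balanced processes. -/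
open Matrix

def IsPLTOn {n : ℕ} (g : Fin n → ℝ) (P : Matrix (Fin n) (Fin n) ℝ)
    (i j : Fin n) (ε : ℝ) : Prop :=
  i ≠ j ∧ ε ∈ Set.Icc (0 : ℝ) 1 ∧
  P i i = 1 - ε * g j / (g i + g j) ∧ P i j = ε * g i / (g i + g j) ∧
  P j i = ε * g j / (g i + g j) ∧ P j j = 1 - ε * g i / (g i + g j) ∧
  ∀ k m : Fin n, ¬(k ∈ ({i, j} : Set (Fin n)) ∧ m ∈ ({i, j} : Set (Fin n))) →
    P k m = if k = m then 1 else 0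

def IsPLT {n : ℕ} (g : Fin n → ℝ) (P : Matrix (Fin n) (Fin n) ℝ) : Prop :=
  ColStochastic P ∧ ∃ (i j : Fin n) (ε : ℝ), IsPLTOn g P i j ε

lemma plt_is_edp {n : ℕ} (g : Fin n → ℝ) (P : Matrix (Fin n) (Fin n) ℝ)
    (i j : Fin n) (ε : ℝ) (hne : g i ≠ g j) (hCS : ColStochastic P)
    (h : IsPLTOn g P i j ε) : IsEDP g P := by
  obtain ⟨hij, hε, hii, hPij, hPji, hjj, hoff⟩ := h
  exact ⟨hCS, i, j, hij, hne, hoff, by rw [hPij, hPji]; ring⟩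

lemma exists_edp {n : ℕ} (g : Fin n → ℝ) (hgpos : ∀ i, 0 < g i) (i j : Fin n)
    (hlt : g j < g i) :
    ∃ E : Matrix (Fin n) (Fin n) ℝ, IsEDP g E ∧ E i j = 1 := by
  have hij : i ≠ j := fun h => by rw [h] at hlt; exact lt_irrefl _ hlt
  have hgi : (0:ℝ) < g i := hgpos i
  have hgi' : g i ≠ 0 := ne_of_gt hgi
  set E : Matrix (Fin n) (Fin n) ℝ := Matrix.of fun k m =>
    if m = i then (if k = i then 1 - g j / g i else if k = j then g j / g i else 0)
    else if m = j then (if k = i then 1 else 0)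
    else if k = m then 1 else 0 with hE
  have hEij : E i j = 1 := by
    simp [hE, hij, Ne.symm hij]
  have hEji : E j i = g j / g i := by
    simp [hE, hij, Ne.symm hij]
  have key : ∀ a b : ℝ, ∑ k : Fin n, (if k = i then a else if k = j then b else 0) = a + b := by
    intro a b
    have h1 : ∀ k : Fin n, (if k = i then a else if k = j then b else 0)
        = (if k = i then a else 0) + (if k = j then b else 0) := by
      intro k
      by_cases h1 : k = i <;> by_cases h2 : k = j <;> simp_all
    simp only [h1, Finset.sum_add_distrib, Finset.sum_ite_eq', Finset.mem_univ, if_true]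
  have hCS : ColStochastic E := by
    constructor
    · intro k m
      simp only [hE, Matrix.of_apply]
      have h1 : g j / g i ≤ 1 := by
        rw [div_le_one hgi]; exact hlt.le
      have h2 : (0:ℝ) ≤ g j / g i := le_of_lt (div_pos (hgpos j) hgi)
      split_ifs <;> linarith
    · intro m
      by_cases hmi : m = i
      · have e1 : ∀ k : Fin n, E k m
            = (if k = i then 1 - g j / g i else if k = j then g j / g i else 0) := by
          intro k; simp only [hE, Matrix.of_apply, if_pos hmi]
        rw [Finset.sum_congr rfl (fun k _ => e1 k), key]
        ring
      · by_cases hmj : m = j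
        · have e1 : ∀ k : Fin n, E k m = (if k = i then 1 else 0) := by
            intro k; simp only [hE, Matrix.of_apply, if_neg hmi, if_pos hmj]
          rw [Finset.sum_congr rfl (fun k _ => e1 k)]
          simp
        · have e1 : ∀ k : Fin n, E k m = (if k = m then 1 else 0) := by
            intro k; simp only [hE, Matrix.of_apply, if_neg hmi, if_neg hmj]
          rw [Finset.sum_congr rfl (fun k _ => e1 k)]
          simp
  refine ⟨E, ⟨hCS, i, j, hij, ne_of_gt hlt, ?_, ?_⟩, hEij⟩
  · intro k m hnot
    simp only [Set.mem_insert_iff, Set.mem_singleton_iff] at hnot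
    push_neg at hnot
    simp only [hE, Matrix.of_apply]
    by_cases hmi : m = i
    · have hk : ¬(k = i ∨ k = j) := fun h => (hnot h).1 hmi
      push_neg at hk
      rw [if_pos hmi, if_neg hk.1, if_neg hk.2, if_neg (by rw [hmi]; exact hk.1)]
    · by_cases hmj : m = j
      · have hk : ¬(k = i ∨ k = j) := fun h => (hnot h).2 hmj
        push_neg at hk
        rw [if_neg hmi, if_pos hmj, if_neg hk.1, if_neg (by rw [hmj]; exact hk.2)]
      · rw [if_neg hmi, if_neg hmj]
  · rw [hEij, hEji, one_mul, div_mul_cancel₀ _ hgi']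

lemma not_plt {n : ℕ} (g : Fin n → ℝ) (hgpos : ∀ i, 0 < g i) (i j : Fin n)
    (hlt : g j < g i) (E : Matrix (Fin n) (Fin n) ℝ) (hE1 : E i j = 1) :
    ¬ IsPLT g E := by
  have hij : i ≠ j := fun h => by rw [h] at hlt; exact lt_irrefl _ hlt
  rintro ⟨hCS, a, b, ε, hab, hε, haa, habP, hba, hbb, hoff⟩
  by_cases hmem : i ∈ ({a, b} : Set (Fin n)) ∧ j ∈ ({a, b} : Set (Fin n))
  · simp only [Set.mem_insert_iff, Set.mem_singleton_iff] at hmem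
    obtain ⟨hi, hj⟩ := hmem
    rcases hi with hi | hi <;> rcases hj with hj | hj
    · exact hij (hi.trans hj.symm)
    · subst hi; subst hj
      have hden : (0:ℝ) < g i + g j := by linarith [hgpos i, hgpos j]
      rw [habP, div_eq_one_iff_eq hden.ne'] at hE1
      nlinarith [hgpos i, hgpos j, hε.1, hε.2]
    · subst hi; subst hj
      have hden : (0:ℝ) < g j + g i := by linarith [hgpos i, hgpos j]
      rw [hba, div_eq_one_iff_eq hden.ne'] at hE1
      nlinarith [hgpos i, hgpos j, hε.1, hε.2]
    · exact hij (hi.trans hj.symm)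
  · have := hoff i j hmem
    rw [hE1, if_neg hij] at this
    exact one_ne_zero this

/-- Every Partial Level Thermalisation on levels with `g i ≠ g j` is an elementary
detailed-balanced process; its de-excitation probability is at most `g i/(g i + g j) < 1`
(for `g j < g i`), so the EDP with de-excitation probability `1` is not a PLT and PLTs
form a strict subset of EDPs. -/
theorem stmt12 {n : ℕ} (g : Fin n → ℝ) (hg : IsProbVec g) (hgpos : ∀ i, 0 < g i) :
    (∀ (P : Matrix (Fin n) (Fin n) ℝ) (i j : Fin n) (ε : ℝ),
      g i ≠ g j → ColStochastic P → IsPLTOn g P i j ε → IsEDP g P) ∧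
    (∀ (P : Matrix (Fin n) (Fin n) ℝ) (i j : Fin n) (ε : ℝ),
      g j < g i → ColStochastic P → IsPLTOn g P i j ε →
        P i j ≤ g i / (g i + g j) ∧ g i / (g i + g j) < 1) ∧
    (∀ i j : Fin n, g j < g i →
      (∃ E : Matrix (Fin n) (Fin n) ℝ, IsEDP g E ∧ E i j = 1) ∧
      (∀ E : Matrix (Fin n) (Fin n) ℝ, IsEDP g E → E i j = 1 → ¬ IsPLT g E)) ∧
    ((∃ i j : Fin n, g j < g i) →
      {P : Matrix (Fin n) (Fin n) ℝ |
          ColStochastic P ∧ ∃ (i j : Fin n) (ε : ℝ), g i ≠ g j ∧ IsPLTOn g P i j ε} ⊂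
        {E : Matrix (Fin n) (Fin n) ℝ | IsEDP g E}) := by
  refine ⟨fun P i j ε hne hCS h => plt_is_edp g P i j ε hne hCS h, ?_, ?_, ?_⟩
  · intro P i j ε hlt hCS h
    obtain ⟨hij, hε, hii, hPij, hPji, hjj, hoff⟩ := h
    have hden : (0:ℝ) < g i + g j := by linarith [hgpos i, hgpos j]
    constructor
    · rw [hPij, div_le_div_iff_of_pos_right hden]
      nlinarith [hgpos i, hε.1, hε.2]
    · rw [div_lt_one hden]
      linarith [hgpos j]
  · intro i j hlt
    exact ⟨exists_edp g hgpos i j hlt, fun E _ hE1 => not_plt g hgpos i j hlt E hE1⟩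
  · rintro ⟨i, j, hlt⟩
    constructor
    · rintro P ⟨hCS, a, b, ε, hne, h⟩
      exact plt_is_edp g P a b ε hne hCS h
    · intro hsub
      obtain ⟨E, hEDP, hE1⟩ := exists_edp g hgpos i j hlt
      have hmem := hsub hEDP
      obtain ⟨hCS, a, b, ε, _, h⟩ := hmem
      exact not_plt g hgpos i j hlt E hE1 ⟨hCS, a, b, ε, h⟩
end

section
/- Let d_1, …, d_n be positive integers, D = ∑_i d_i, and let g be the probability vector with g_i = d_i/D. If G is a column-stochastic n×n matrix with G g = g, then there exists a doubly stochastic D×D matrix M such that M ∘ Γ = Γ ∘ G, i.e. M(Γ(p)) = Γ(G p) for every p ∈ ℝ^n. -/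
open Matrix

/-- The embedding map `Γ : ℝ^n → ℝ^D` for `g i = d i / D`: the `i`-th block consists of
`d i` copies of `p i / d i`; here `ℝ^D` is indexed by `Σ i, Fin (d i)` (of cardinality
`D = ∑ i, d i`). -/
noncomputable def embed {n : ℕ} (d : Fin n → ℕ) (p : Fin n → ℝ) :
    (Σ i : Fin n, Fin (d i)) → ℝ :=
  fun x => p x.1 / (d x.1 : ℝ)

/-- If `G` is column-stochastic and preserves the Gibbs distribution `g` (with
`g i = d i / D`), then there is a doubly stochastic `D × D` matrix `M` with
`M ∘ Γ = Γ ∘ G`. -/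
theorem stmt14 {n : ℕ} (d : Fin n → ℕ) (hd : ∀ i, 0 < d i)
    (D : ℕ) (hD : D = ∑ i, d i)
    (g : Fin n → ℝ) (hg : ∀ i, g i = (d i : ℝ) / (D : ℝ))
    (G : Matrix (Fin n) (Fin n) ℝ) (hG : ColStochastic G) (hGg : G *ᵥ g = g) :
    ∃ M : Matrix (Σ i : Fin n, Fin (d i)) (Σ i : Fin n, Fin (d i)) ℝ,
      (∀ x y, 0 ≤ M x y) ∧ (∀ x, ∑ y, M x y = 1) ∧ (∀ y, ∑ x, M x y = 1) ∧
      ∀ p : Fin n → ℝ, M *ᵥ embed d p = embed d (G *ᵥ p) := by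
  have hdne : ∀ i, (d i : ℝ) ≠ 0 := fun i => Nat.cast_ne_zero.mpr (hd i).ne'
  -- key: ∑ j, G i j * d j = d i
  have hrow : ∀ i, ∑ j, G i j * (d j : ℝ) = (d i : ℝ) := by
    intro i
    have hDpos : (0 : ℝ) < D := by
      have : 0 < D := by
        rw [hD]
        exact Finset.sum_pos (fun j _ => hd j) ⟨i, Finset.mem_univ i⟩
      exact_mod_cast this
    have h := congrFun hGg i
    simp only [mulVec, dotProduct] at h
    have h' : ∑ j, G i j * ((d j : ℝ) / D) = (d i : ℝ) / D := by
      simpa [hg] using h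
    have := congrArg (· * (D : ℝ)) h'
    simp only [Finset.sum_mul] at this
    calc ∑ j, G i j * (d j : ℝ)
        = ∑ j, G i j * ((d j : ℝ) / D) * D := by
          refine Finset.sum_congr rfl fun j _ => ?_
          field_simp
      _ = (d i : ℝ) / D * D := this
      _ = (d i : ℝ) := by field_simp
  refine ⟨fun x y => G x.1 y.1 / (d x.1 : ℝ), ?_, ?_, ?_, ?_⟩
  · intro x y
    exact div_nonneg (hG.1 x.1 y.1) (by positivity)
  · intro x
    rw [← Finset.univ_sigma_univ, Finset.sum_sigma]
    simp only [Finset.sum_const, Finset.card_univ, Fintype.card_fin, nsmul_eq_mul]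
    have : ∑ j, (d j : ℝ) * (G x.1 j / (d x.1 : ℝ))
        = (∑ j, G x.1 j * (d j : ℝ)) / (d x.1 : ℝ) := by
      rw [Finset.sum_div]
      exact Finset.sum_congr rfl fun j _ => by ring
    rw [this, hrow, div_self (hdne x.1)]
  · intro y
    rw [← Finset.univ_sigma_univ, Finset.sum_sigma]
    simp only [Finset.sum_const, Finset.card_univ, Fintype.card_fin, nsmul_eq_mul]
    have : ∑ i, (d i : ℝ) * (G i y.1 / (d i : ℝ)) = ∑ i, G i y.1 := by
      refine Finset.sum_congr rfl fun i _ => ?_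
      rw [mul_div_assoc', mul_comm]
      exact mul_div_cancel_right₀ _ (hdne i)
    rw [this, hG.2 y.1]
  · intro p
    funext x
    simp only [mulVec, dotProduct, embed]
    rw [← Finset.univ_sigma_univ, Finset.sum_sigma]
    simp only [Finset.sum_const, Finset.card_univ, Fintype.card_fin, nsmul_eq_mul]
    rw [Finset.sum_div]
    refine Finset.sum_congr rfl fun j _ => ?_
    have h1 := hdne j
    have h2 := hdne x.1
    field_simp
end
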